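/- arXiv:1802.00084 — 4 statements merged into one kernel-verified Lean document; each statement's English description precedes it below -/
import Mathlib

section
/- There is a function f : ℕ → ℕ such that for every finite simple graph G and every set T of vertices of G, there exists a matching-mimicking network G' for (G, T) having at most f(|T|) vertices. -/
/-- A finite simple graph: a finite vertex set together with a symmetric,
irreflexive adjacency relation whose endpoints lie in the vertex set. -/
structure FinGraph (V : Type) where
  verts : Set V
  finite : verts.Finite
  Adj : V → V → Prop
  symm : ∀ u v, Adj u v → Adj v u
  irrefl : ∀ v, ¬ Adj v v
  mem_of_adj : ∀ u v, Adj u v → u ∈ verts ∧ v ∈ verts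

/-- The set of vertices covered by a set of (unordered) edges. -/
def coversVerts {V : Type} (M : Set (Sym2 V)) : Set V := {v | ∃ e ∈ M, v ∈ e}

/-- `M` is a matching of `G`: a set of edges of `G`, no two of which share an endpoint. -/
def FinGraph.IsMatching {V : Type} (G : FinGraph V) (M : Set (Sym2 V)) : Prop :=
  (∀ e ∈ M, ∃ u v, G.Adj u v ∧ e = s(u, v)) ∧
  ∀ e ∈ M, ∀ f ∈ M, e ≠ f → ∀ v, v ∈ e → v ∉ f

/-- The matching pattern of `G` on a terminal set `T`: the family of subsets `X ⊆ T`
such that some matching of `G` covers exactly `(V(G) \ T) ∪ X`. -/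
def FinGraph.matchingPattern {V : Type} (G : FinGraph V) (T : Set V) : Set (Set V) :=
  {X | X ⊆ T ∧ ∃ M, G.IsMatching M ∧ coversVerts M = (G.verts \ T) ∪ X}

/-!
Relabel the vertices of `G` injectively by natural numbers so that the terminals become
`{0, …, |T| - 1}` and the vertex set becomes an initial segment of `ℕ`; such relabellings
transport matching patterns. The resulting patterns are families of subsets of a fixed finite
set, so only finitely many of them occur for a given `|T|`. Take `f |T|` to be the largest,
over these patterns, of the smallest size of a canonically labelled graph realising the
pattern, and pull a smallest realisation of the pattern of `G` back to `V` along the inverse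
relabelling.
-/

open Set

namespace FinGraph

variable {V W : Type}

def map (φ : V → W) (G : FinGraph V) : FinGraph W where
  verts := φ '' G.verts
  finite := G.finite.image φ
  Adj a b := a ≠ b ∧ ∃ u v, G.Adj u v ∧ a = φ u ∧ b = φ v
  symm := by
    rintro a b ⟨hne, u, v, h, rfl, rfl⟩
    exact ⟨hne.symm, v, u, G.symm u v h, rfl, rfl⟩
  irrefl := by rintro v ⟨hne, -⟩; exact hne rfl
  mem_of_adj := by
    rintro a b ⟨-, u, v, h, rfl, rfl⟩
    obtain ⟨hu, hv⟩ := G.mem_of_adj u v h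
    exact ⟨⟨u, hu, rfl⟩, ⟨v, hv, rfl⟩⟩

variable {G : FinGraph V} {φ : V → W} {M : Set (Sym2 V)}

lemma ne_of_adj {u v : V} (h : G.Adj u v) : u ≠ v := by
  rintro rfl
  exact G.irrefl u h

lemma IsMatching.coversVerts_subset (hM : G.IsMatching M) : coversVerts M ⊆ G.verts := by
  rintro x ⟨e, he, hxe⟩
  obtain ⟨u, v, huv, rfl⟩ := hM.1 e he
  rcases Sym2.mem_iff.1 hxe with rfl | rfl
  exacts [(G.mem_of_adj _ _ huv).1, (G.mem_of_adj _ _ huv).2]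

lemma IsMatching.map (hφ : InjOn φ G.verts) (hM : G.IsMatching M) :
    (G.map φ).IsMatching (Sym2.map φ '' M) := by
  refine ⟨?_, ?_⟩
  · rintro _ ⟨e, he, rfl⟩
    obtain ⟨u, v, huv, rfl⟩ := hM.1 e he
    obtain ⟨hu, hv⟩ := G.mem_of_adj _ _ huv
    exact ⟨φ u, φ v, ⟨fun h => ne_of_adj huv (hφ hu hv h), u, v, huv, rfl, rfl⟩, rfl⟩
  · rintro _ ⟨e, he, rfl⟩ _ ⟨f, hf, rfl⟩ hne _ hwe hwf
    obtain ⟨a, hae, rfl⟩ := Sym2.mem_map.1 hwe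
    obtain ⟨b, hbf, hab⟩ := Sym2.mem_map.1 hwf
    have hba : b = a :=
      hφ (hM.coversVerts_subset ⟨f, hf, hbf⟩) (hM.coversVerts_subset ⟨e, he, hae⟩) hab
    exact hM.2 e he f hf (fun h => hne (h ▸ rfl)) a hae (hba ▸ hbf)

lemma eq_of_map_pair_eq (hφ : InjOn φ G.verts) {u v u' v' : V} (h : G.Adj u v)
    (h' : G.Adj u' v') (heq : s(φ u, φ v) = s(φ u', φ v')) : s(u, v) = s(u', v') := by
  obtain ⟨hu, hv⟩ := G.mem_of_adj _ _ h
  obtain ⟨hu', hv'⟩ := G.mem_of_adj _ _ h'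
  rw [Sym2.eq_iff] at heq ⊢
  rcases heq with ⟨h1, h2⟩ | ⟨h1, h2⟩
  · exact Or.inl ⟨hφ hu hu' h1, hφ hv hv' h2⟩
  · exact Or.inr ⟨hφ hu hv' h1, hφ hv hu' h2⟩

lemma IsMatching.exists_map_eq (hφ : InjOn φ G.verts) {M' : Set (Sym2 W)}
    (hM' : (G.map φ).IsMatching M') : ∃ M, G.IsMatching M ∧ Sym2.map φ '' M = M' := by
  refine ⟨{e | (∃ u v, G.Adj u v ∧ e = s(u, v)) ∧ Sym2.map φ e ∈ M'}, ⟨?_, ?_⟩, ?_⟩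
  · exact fun e he => he.1
  · rintro _ ⟨⟨u, v, huv, rfl⟩, he⟩ _ ⟨⟨u', v', huv', rfl⟩, hf⟩ hne w hwe hwf
    have hmap : Sym2.map φ s(u, v) = Sym2.map φ s(u', v') := by
      by_contra h
      exact hM'.2 _ he _ hf h (φ w) (Sym2.mem_map.2 ⟨w, hwe, rfl⟩) (Sym2.mem_map.2 ⟨w, hwf, rfl⟩)
    exact hne (eq_of_map_pair_eq hφ huv huv' hmap)
  · ext e'
    refine ⟨fun ⟨e, he, hee'⟩ => hee' ▸ he.2, fun he' => ?_⟩
    obtain ⟨_, _, ⟨-, u, v, huv, rfl, rfl⟩, rfl⟩ := hM'.1 e' he'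
    exact ⟨s(u, v), ⟨⟨u, v, huv, rfl⟩, he'⟩, rfl⟩

lemma coversVerts_image_map (φ : V → W) (M : Set (Sym2 V)) :
    coversVerts (Sym2.map φ '' M) = φ '' coversVerts M := by
  ext w
  constructor
  · rintro ⟨_, ⟨e, he, rfl⟩, hw⟩
    obtain ⟨x, hx, rfl⟩ := Sym2.mem_map.1 hw
    exact ⟨x, ⟨e, he, hx⟩, rfl⟩
  · rintro ⟨x, ⟨e, he, hx⟩, rfl⟩
    exact ⟨Sym2.map φ e, ⟨e, he, rfl⟩, Sym2.mem_map.2 ⟨x, hx, rfl⟩⟩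

lemma matchingPattern_map {T : Set V} (hT : T ⊆ G.verts) (hφ : InjOn φ G.verts) :
    (G.map φ).matchingPattern (φ '' T) = image φ '' G.matchingPattern T := by
  have hcover (X : Set V) : φ '' ((G.verts \ T) ∪ X) = ((G.map φ).verts \ φ '' T) ∪ φ '' X := by
    rw [image_union, hφ.image_sdiff_subset hT]
    rfl
  ext Y
  constructor
  · rintro ⟨hYT, M', hM', hcov⟩
    obtain ⟨M, hM, rfl⟩ := hM'.exists_map_eq hφ
    have hY : φ '' (T ∩ φ ⁻¹' Y) = Y := by
      rw [image_inter_preimage]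
      exact inter_eq_right.2 hYT
    refine ⟨T ∩ φ ⁻¹' Y, ⟨inter_subset_left, M, hM, ?_⟩, hY⟩
    rw [← hφ.image_eq_image_iff hM.coversVerts_subset
      (union_subset sdiff_subset (inter_subset_left.trans hT)), hcover, hY,
      ← coversVerts_image_map, hcov]
  · rintro ⟨X, ⟨hXT, M, hM, hcov⟩, rfl⟩
    exact ⟨image_mono hXT, _, hM.map hφ, by rw [coversVerts_image_map, hcov, hcover]⟩

end FinGraph

def IsRealizable (k m : ℕ) (P : Set (Set ℕ)) : Prop :=
  ∃ H : FinGraph ℕ, H.verts = Iio m ∧ k ≤ m ∧ H.matchingPattern (Iio k) = P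

lemma finite_setOf_isRealizable (k : ℕ) : {P | ∃ m, IsRealizable k m P}.Finite := by
  refine (finite_Iio k).finite_subsets.finite_subsets.subset ?_
  rintro P ⟨m, H, -, -, rfl⟩ X hX
  exact hX.1

noncomputable def minRealizationSize (k : ℕ) (P : Set (Set ℕ)) : ℕ :=
  sInf {m | IsRealizable k m P}

noncomputable def mimickingBound (k : ℕ) : ℕ :=
  sSup (minRealizationSize k '' {P | ∃ m, IsRealizable k m P})

lemma exists_isRealizable_le_mimickingBound {k n : ℕ} {P : Set (Set ℕ)}
    (h : IsRealizable k n P) : ∃ m ≤ n, m ≤ mimickingBound k ∧ IsRealizable k m P :=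
  ⟨minRealizationSize k P, Nat.sInf_le h,
    le_csSup ((finite_setOf_isRealizable k).image _).bddAbove ⟨P, ⟨n, h⟩, rfl⟩,
    Nat.sInf_mem (s := {m | IsRealizable k m P}) ⟨n, h⟩⟩

lemma exists_bijOn_Iio {V : Type} {A T : Set V} (hA : A.Finite) (hT : T ⊆ A) :
    ∃ φ : V → ℕ, BijOn φ A (Iio A.ncard) ∧ φ '' T = Iio T.ncard := by
  classical
  have hTA : T.ncard ≤ A.ncard := ncard_le_ncard hT hA
  obtain ⟨f, hf⟩ := (hA.subset hT).exists_bijOn_of_encard_eq (t := Iio T.ncard) (by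
    rw [← (hA.subset hT).cast_ncard_eq, ← (finite_Iio _).cast_ncard_eq, ncard_Iio_nat])
  obtain ⟨g, hg⟩ := (hA.sdiff (t := T)).exists_bijOn_of_encard_eq (t := Ico T.ncard A.ncard) (by
    rw [← (hA.sdiff (t := T)).cast_ncard_eq, ← (finite_Ico _ _).cast_ncard_eq, ncard_Ico_nat,
      ncard_sdiff hT (hA.subset hT)])
  have hf' : BijOn (T.piecewise f g) T (Iio T.ncard) := hf.congr (piecewise_eqOn T f g).symm
  have hg' : BijOn (T.piecewise f g) (A \ T) (Ico T.ncard A.ncard) :=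
    hg.congr fun x hx => (piecewise_eq_of_notMem _ _ _ hx.2).symm
  have hinj : InjOn (T.piecewise f g) (T ∪ A \ T) :=
    (injOn_union disjoint_sdiff_right).2 ⟨hf'.injOn, hg'.injOn, fun x hx y hy hxy =>
      (hf'.mapsTo hx).not_ge (hxy ▸ (hg'.mapsTo hy).1)⟩
  have hbij := hf'.union hg' hinj
  rw [union_sdiff_cancel hT, Iio_union_Ico_eq_Iio hTA] at hbij
  exact ⟨T.piecewise f g, hbij, hf'.image_eq⟩

/-- There is a function `f : ℕ → ℕ` such that every finite simple graph `G` with a set `T`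
of terminal vertices has a matching-mimicking network (a graph containing `T` with the same
matching pattern on `T`) with at most `f (|T|)` vertices. -/
theorem matching_mimicking_network_exists :
    ∃ f : ℕ → ℕ, ∀ (V : Type) (G : FinGraph V) (T : Set V), T ⊆ G.verts →
      ∃ G' : FinGraph V, T ⊆ G'.verts ∧
        G'.matchingPattern T = G.matchingPattern T ∧
        G'.verts.ncard ≤ f T.ncard := by
  refine ⟨mimickingBound, fun V G T hT => ?_⟩
  rcases G.verts.eq_empty_or_nonempty with hG | ⟨v, -⟩
  · exact ⟨G, hT, rfl, by simp [hG]⟩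
  have : Nonempty V := ⟨v⟩
  obtain ⟨φ, hφ, hφT⟩ := exists_bijOn_Iio G.finite hT
  have hGφ : IsRealizable T.ncard G.verts.ncard (image φ '' G.matchingPattern T) :=
    ⟨G.map φ, hφ.image_eq, ncard_le_ncard hT G.finite, by
      rw [← hφT, G.matchingPattern_map hT hφ.injOn]⟩
  obtain ⟨m, hmn, hm, H, hHv, hkm, hHP⟩ := exists_isRealizable_le_mimickingBound hGφ
  set ψ := Function.invFunOn φ G.verts
  have hψφ : LeftInvOn ψ φ G.verts := hφ.injOn.leftInvOn_invFunOn
  have hψ : InjOn ψ H.verts := (Function.invFunOn_injOn_image φ G.verts).mono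
    (by rw [hφ.image_eq, hHv]; exact Iio_subset_Iio hmn)
  have hψT : ψ '' Iio T.ncard = T := by rw [← hφT]; exact hψφ.image_image' hT
  have hTH : Iio T.ncard ⊆ H.verts := hHv ▸ Iio_subset_Iio hkm
  refine ⟨H.map ψ, hψT ▸ image_mono hTH, ?_, ?_⟩
  · have hpat := H.matchingPattern_map hTH hψ
    rw [hψT, hHP, image_image] at hpat
    rw [hpat]
    conv_rhs => rw [← image_id (G.matchingPattern T)]
    exact image_congr fun X hX => hψφ.image_image' (hX.1.trans hT)
  · change (ψ '' H.verts).ncard ≤ mimickingBound T.ncard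
    rwa [hψ.ncard_image, hHv, ncard_Iio_nat]
end

section
/- Let G and G' be finite simple graphs that are matching-equivalent on a common terminal set T, and let H be a finite simple graph with V(H) ∩ V(G) = T and V(H) ∩ V(G') = T. Then for every set T' ⊆ V(H), the union graph H ∪ G (on vertex set V(H) ∪ V(G) with edge set E(H) ∪ E(G)) and the union graph H ∪ G' are matching-equivalent on T'. In particular, replacing G by a matching-mimicking network inside a larger graph does not change the matching pattern of the larger graph on any terminal set contained in the untouched part. -/
/-- The union of two graphs on a common ambient vertex type: the union of the vertex sets
together with the union of the edge sets. -/
def FinGraph.union {V : Type} (G H : FinGraph V) : FinGraph V where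
  verts := G.verts ∪ H.verts
  finite := G.finite.union H.finite
  Adj u v := G.Adj u v ∨ H.Adj u v
  symm u v h := h.elim (fun h' => Or.inl (G.symm u v h')) (fun h' => Or.inr (H.symm u v h'))
  irrefl v h := h.elim (G.irrefl v) (H.irrefl v)
  mem_of_adj u v h := by
    rcases h with h | h
    · exact ⟨Or.inl (G.mem_of_adj u v h).1, Or.inl (G.mem_of_adj u v h).2⟩
    · exact ⟨Or.inr (H.mem_of_adj u v h).1, Or.inr (H.mem_of_adj u v h).2⟩

lemma coversVerts_union' {V : Type} (M N : Set (Sym2 V)) :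
    coversVerts (M ∪ N) = coversVerts M ∪ coversVerts N := by
  ext v
  simp only [coversVerts, Set.mem_setOf_eq, Set.mem_union]
  constructor
  · rintro ⟨e, (he | he), hv⟩
    · exact Or.inl ⟨e, he, hv⟩
    · exact Or.inr ⟨e, he, hv⟩
  · rintro (⟨e, he, hv⟩ | ⟨e, he, hv⟩)
    · exact ⟨e, Or.inl he, hv⟩
    · exact ⟨e, Or.inr he, hv⟩

lemma coversVerts_subset' {V : Type} (G : FinGraph V) (M : Set (Sym2 V))
    (h : ∀ e ∈ M, ∃ u v, G.Adj u v ∧ e = s(u, v)) :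
    coversVerts M ⊆ G.verts := by
  rintro x ⟨e, heM, hxe⟩
  obtain ⟨u, v, huv, rfl⟩ := h e heM
  rcases Sym2.mem_iff.mp hxe with rfl | rfl
  · exact (G.mem_of_adj _ _ huv).1
  · exact (G.mem_of_adj _ _ huv).2

lemma union_matching_key {V : Type} (G G' H : FinGraph V) (T : Set V)
    (heq : G.matchingPattern T ⊆ G'.matchingPattern T)
    (hHG : H.verts ∩ G.verts = T) (hHG' : H.verts ∩ G'.verts = T)
    (T' : Set V) (hT' : T' ⊆ H.verts) :
    (H.union G).matchingPattern T' ⊆ (H.union G').matchingPattern T' := by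
  rintro X ⟨hXT', M, ⟨hMe, hMd⟩, hMcov⟩
  have hTH : T ⊆ H.verts := fun v hv => ((hHG ▸ hv) : v ∈ H.verts ∩ G.verts).1
  set MH : Set (Sym2 V) := {e ∈ M | ∃ u v, H.Adj u v ∧ e = s(u, v)} with hMHdef
  set MG : Set (Sym2 V) := M \ MH with hMGdef
  have hMHe : ∀ e ∈ MH, ∃ u v, H.Adj u v ∧ e = s(u, v) := fun e he => he.2
  have hMGe : ∀ e ∈ MG, ∃ u v, G.Adj u v ∧ e = s(u, v) := by
    rintro e ⟨heM, heH⟩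
    obtain ⟨u, v, huv, rfl⟩ := hMe e heM
    rcases huv with h | h
    · exact absurd ⟨heM, u, v, h, rfl⟩ heH
    · exact ⟨u, v, h, rfl⟩
  have hA : coversVerts MH ⊆ H.verts := coversVerts_subset' H MH hMHe
  have hB : coversVerts MG ⊆ G.verts := coversVerts_subset' G MG hMGe
  have hMsplit : M = MH ∪ MG := by
    ext e
    simp only [hMGdef, Set.mem_union, Set.mem_diff]
    constructor
    · intro h
      by_cases hH : e ∈ MH
      · exact Or.inl hH
      · exact Or.inr ⟨h, hH⟩
    · rintro (h | h)
      · exact h.1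
      · exact h.1
  have hcovM : coversVerts M = coversVerts MH ∪ coversVerts MG := by
    rw [hMsplit, coversVerts_union']
  have hABdisj : ∀ v, v ∈ coversVerts MH → v ∉ coversVerts MG := by
    rintro v ⟨e, heMH, hve⟩ ⟨f, hfMG, hvf⟩
    have hef : e ≠ f := by rintro rfl; exact hfMG.2 heMH
    exact hMd e heMH.1 f hfMG.1 hef v hve hvf
  have hGH : ∀ v ∈ G.verts, v ∉ T → v ∉ H.verts := by
    intro v hvG hvT hvH
    exact hvT (hHG ▸ (⟨hvH, hvG⟩ : v ∈ H.verts ∩ G.verts))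
  have hG'H : ∀ v ∈ G'.verts, v ∉ T → v ∉ H.verts := by
    intro v hvG hvT hvH
    exact hvT (hHG' ▸ (⟨hvH, hvG⟩ : v ∈ H.verts ∩ G'.verts))
  set Y := coversVerts MG ∩ T with hYdef
  have hBeq : coversVerts MG = (G.verts \ T) ∪ Y := by
    apply Set.Subset.antisymm
    · intro v hv
      by_cases hvT : v ∈ T
      · exact Or.inr ⟨hv, hvT⟩
      · exact Or.inl ⟨hB hv, hvT⟩
    · rintro v (⟨hvG, hvT⟩ | hv)
      · have hvH : v ∉ H.verts := hGH v hvG hvT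
        have hvM : v ∈ coversVerts M := by
          rw [hMcov]
          exact Or.inl ⟨Or.inr hvG, fun h => hvH (hT' h)⟩
        rw [hcovM] at hvM
        rcases hvM with h | h
        · exact absurd (hA h) hvH
        · exact h
      · exact hv.1
  have hYpat : Y ∈ G.matchingPattern T := by
    refine ⟨Set.inter_subset_right, MG, ⟨hMGe, ?_⟩, hBeq⟩
    intro e he f hf
    exact hMd e he.1 f hf.1
  obtain ⟨hYT, M', ⟨hM'e, hM'd⟩, hM'cov⟩ := heq hYpat
  have hAM' : ∀ v, v ∈ coversVerts MH → v ∉ coversVerts M' := by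
    intro v hvA hvM'
    have hvH := hA hvA
    rw [hM'cov] at hvM'
    rcases hvM' with ⟨hvG', hvT⟩ | hvY
    · exact hG'H v hvG' hvT hvH
    · exact hABdisj v hvA hvY.1
  have hAY : coversVerts MH ∪ Y = (H.verts \ T') ∪ X := by
    apply Set.Subset.antisymm
    · rintro v (hv | hv)
      · have hvH := hA hv
        have hvM : v ∈ coversVerts M := by rw [hcovM]; exact Or.inl hv
        rw [hMcov] at hvM
        rcases hvM with ⟨_, hvT'⟩ | hvX
        · exact Or.inl ⟨hvH, hvT'⟩
        · exact Or.inr hvX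
      · have hvH : v ∈ H.verts := hTH hv.2
        have hvM : v ∈ coversVerts M := by rw [hcovM]; exact Or.inr hv.1
        rw [hMcov] at hvM
        rcases hvM with ⟨_, hvT'⟩ | hvX
        · exact Or.inl ⟨hvH, hvT'⟩
        · exact Or.inr hvX
    · intro v hv
      have hvH : v ∈ H.verts := by
        rcases hv with hv | hv
        · exact hv.1
        · exact hT' (hXT' hv)
      have hvM : v ∈ coversVerts M := by
        rw [hMcov]
        rcases hv with hv | hv
        · exact Or.inl ⟨Or.inl hv.1, hv.2⟩
        · exact Or.inr hv
      rw [hcovM] at hvM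
      rcases hvM with h | h
      · exact Or.inl h
      · rw [hBeq] at h
        rcases h with ⟨hvG, hvT⟩ | h
        · exact absurd hvH (hGH v hvG hvT)
        · exact Or.inr h
  refine ⟨hXT', MH ∪ M', ⟨?_, ?_⟩, ?_⟩
  · rintro e (he | he)
    · obtain ⟨u, v, huv, rfl⟩ := hMHe e he
      exact ⟨u, v, Or.inl huv, rfl⟩
    · obtain ⟨u, v, huv, rfl⟩ := hM'e e he
      exact ⟨u, v, Or.inr huv, rfl⟩
  · rintro e (he | he) f (hf | hf) hef v hve hvf
    · exact hMd e he.1 f hf.1 hef v hve hvf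
    · exact hAM' v ⟨e, he, hve⟩ ⟨f, hf, hvf⟩
    · exact hAM' v ⟨f, hf, hvf⟩ ⟨e, he, hve⟩
    · exact hM'd e he f hf hef v hve hvf
  · rw [coversVerts_union', hM'cov]
    have hrearr : coversVerts MH ∪ ((G'.verts \ T) ∪ Y)
        = (coversVerts MH ∪ Y) ∪ (G'.verts \ T) := by
      ext v
      simp only [Set.mem_union]
      tauto
    rw [hrearr, hAY]
    show ((H.verts \ T') ∪ X) ∪ (G'.verts \ T)
        = ((H.union G').verts \ T') ∪ X
    have hverts : (H.union G').verts = H.verts ∪ G'.verts := rfl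
    rw [hverts]
    apply Set.Subset.antisymm
    · rintro v ((hv | hv) | hv)
      · exact Or.inl ⟨Or.inl hv.1, hv.2⟩
      · exact Or.inr hv
      · refine Or.inl ⟨Or.inr hv.1, fun hvT' => ?_⟩
        exact hv.2 (hHG' ▸ (⟨hT' hvT', hv.1⟩ : v ∈ H.verts ∩ G'.verts))
    · rintro v (⟨(hv | hv), hvT'⟩ | hv)
      · exact Or.inl (Or.inl ⟨hv, hvT'⟩)
      · by_cases hvT : v ∈ T
        · exact Or.inl (Or.inl ⟨hTH hvT, hvT'⟩)
        · exact Or.inr ⟨hv, hvT⟩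
      · exact Or.inl (Or.inr hv)

/-- If `G` and `G'` are matching-equivalent on a common terminal set `T`, and `H` meets each
of `G` and `G'` exactly in `T`, then for every terminal set `T' ⊆ V(H)` the union graphs
`H ∪ G` and `H ∪ G'` are matching-equivalent on `T'`: replacing `G` by a matching-mimicking
network inside a larger graph does not change the matching pattern of the larger graph. -/
theorem union_matching_equivalent {V : Type} (G G' H : FinGraph V) (T : Set V)
    (hTG : T ⊆ G.verts) (hTG' : T ⊆ G'.verts)
    (heq : G.matchingPattern T = G'.matchingPattern T)
    (hHG : H.verts ∩ G.verts = T) (hHG' : H.verts ∩ G'.verts = T) :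
    ∀ T' ⊆ H.verts,
      (H.union G).matchingPattern T' = (H.union G').matchingPattern T' := by
  intro T' hT'
  apply Set.Subset.antisymm
  · exact union_matching_key G G' H T heq.le hHG hHG' T' hT'
  · exact union_matching_key G' G H T heq.ge hHG' hHG T' hT'
end

section
/- Let G₁ and G₂ be finite simple graphs with V(G₁) ∩ V(G₂) = S, and suppose no edge of G₂ has both of its endpoints in S. Let G be the union graph on V(G₁) ∪ V(G₂) with edge set E(G₁) ∪ E(G₂). Then for every terminal set T ⊆ V(G₁) ∖ S and every X ⊆ T: X belongs to the matching pattern of G on T if and only if there exists Y ⊆ S such that Y belongs to the matching pattern of G₂ on S and X ∪ (S ∖ Y) belongs to the matching pattern of G₁ on T ∪ S. -/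
/-- Correctness of combining the pieces of a clique-sum on the separator `S`:
if `V(G₁) ∩ V(G₂) = S` and no edge of `G₂` has both endpoints in `S`, then for every
terminal set `T ⊆ V(G₁) \ S` and every `X ⊆ T`, `X` is in the matching pattern of the
union graph `G₁ ∪ G₂` on `T` iff there is `Y ⊆ S` in the matching pattern of `G₂` on `S`
with `X ∪ (S \ Y)` in the matching pattern of `G₁` on `T ∪ S`. -/
theorem cliqueSum_matchingPattern {V : Type} (G₁ G₂ : FinGraph V) (S : Set V)
    (hS : G₁.verts ∩ G₂.verts = S)
    (hE : ∀ u v, G₂.Adj u v → ¬(u ∈ S ∧ v ∈ S)) :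
    ∀ T ⊆ G₁.verts \ S, ∀ X ⊆ T,
      (X ∈ (G₁.union G₂).matchingPattern T ↔
        ∃ Y ⊆ S, Y ∈ G₂.matchingPattern S ∧
          (X ∪ (S \ Y)) ∈ G₁.matchingPattern (T ∪ S)) := by
  intro T hT X hX
  have hSmem : ∀ v, v ∈ S ↔ v ∈ G₁.verts ∧ v ∈ G₂.verts := fun v =>
    (Set.ext_iff.mp hS v).symm
  have hSV₁ : S ⊆ G₁.verts := fun v hv => ((hSmem v).mp hv).1
  have hSV₂ : S ⊆ G₂.verts := fun v hv => ((hSmem v).mp hv).2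
  have hTV₁ : ∀ v ∈ T, v ∈ G₁.verts := fun v hv => (hT hv).1
  have hTnS : ∀ v ∈ T, v ∉ S := fun v hv => (hT hv).2
  have hTnV₂ : ∀ v ∈ T, v ∉ G₂.verts := fun v hv h2 =>
    hTnS v hv ((hSmem v).mpr ⟨hTV₁ v hv, h2⟩)
  constructor
  · rintro ⟨hXT, M, ⟨hMe, hMd⟩, hMc⟩
    set M₁ : Set (Sym2 V) := {e ∈ M | ∃ u v, G₁.Adj u v ∧ e = s(u, v)} with hM₁def
    set M₂ : Set (Sym2 V) := M \ M₁ with hM₂def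
    have hM₁M : M₁ ⊆ M := fun e he => he.1
    have hM₂M : M₂ ⊆ M := fun e he => he.1
    have hM2e : ∀ e ∈ M₂, ∃ u v, G₂.Adj u v ∧ e = s(u, v) := by
      rintro e ⟨heM, heN⟩
      rcases hMe e heM with ⟨u, v, huv, rfl⟩
      rcases huv with h | h
      · exact absurd ⟨heM, u, v, h, rfl⟩ heN
      · exact ⟨u, v, h, rfl⟩
    have hc₁ : coversVerts M₁ ⊆ G₁.verts := by
      rintro v ⟨e, ⟨heM, u, w, hadj, rfl⟩, hv⟩
      rcases Sym2.mem_iff.mp hv with rfl | rfl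
      · exact (G₁.mem_of_adj _ _ hadj).1
      · exact (G₁.mem_of_adj _ _ hadj).2
    have hc₂ : coversVerts M₂ ⊆ G₂.verts := by
      rintro v ⟨e, he, hv⟩
      rcases hM2e e he with ⟨u, w, hadj, rfl⟩
      rcases Sym2.mem_iff.mp hv with rfl | rfl
      · exact (G₂.mem_of_adj _ _ hadj).1
      · exact (G₂.mem_of_adj _ _ hadj).2
    have hdisj : ∀ v, v ∈ coversVerts M₁ → v ∈ coversVerts M₂ → False := by
      rintro v ⟨e, he, hve⟩ ⟨f, hf, hvf⟩
      have hef : e ≠ f := fun h => hf.2 (h ▸ he)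
      exact hMd e (hM₁M he) f (hM₂M hf) hef v hve hvf
    have hcov : coversVerts M = coversVerts M₁ ∪ coversVerts M₂ := by
      ext v
      constructor
      · rintro ⟨e, heM, hv⟩
        by_cases h1 : e ∈ M₁
        · exact Or.inl ⟨e, h1, hv⟩
        · exact Or.inr ⟨e, ⟨heM, h1⟩, hv⟩
      · rintro (⟨e, he, hv⟩ | ⟨e, he, hv⟩)
        · exact ⟨e, hM₁M he, hv⟩
        · exact ⟨e, hM₂M he, hv⟩
    set Y : Set V := S ∩ coversVerts M₂ with hYdef
    have hYS : Y ⊆ S := Set.inter_subset_left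
    -- Key: coversVerts M₂ = (G₂.verts \ S) ∪ Y
    have hcov₂ : coversVerts M₂ = (G₂.verts \ S) ∪ Y := by
      ext v
      constructor
      · intro h
        by_cases hs : v ∈ S
        · exact Or.inr ⟨hs, h⟩
        · exact Or.inl ⟨hc₂ h, hs⟩
      · rintro (⟨hv2, hvs⟩ | ⟨_, h⟩)
        · have hvM : v ∈ coversVerts M := by
            rw [hMc]
            exact Or.inl ⟨Or.inr hv2, fun ht => hvs ((hSmem v).mpr ⟨hTV₁ v ht, hv2⟩)⟩
          rw [hcov] at hvM
          rcases hvM with h1 | h2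
          · exact absurd ((hSmem v).mpr ⟨hc₁ h1, hv2⟩) hvs
          · exact h2
        · exact h
    -- Key: coversVerts M₁ = (G₁.verts \ (T ∪ S)) ∪ (X ∪ (S \ Y))
    have hcov₁ : coversVerts M₁ = (G₁.verts \ (T ∪ S)) ∪ (X ∪ (S \ Y)) := by
      ext v
      constructor
      · intro h
        have hv1 : v ∈ G₁.verts := hc₁ h
        have hnc2 : v ∉ coversVerts M₂ := fun h2 => hdisj v h h2
        have hvM : v ∈ coversVerts M := by rw [hcov]; exact Or.inl h
        rw [hMc] at hvM
        rcases hvM with ⟨_, hvt⟩ | hvx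
        · by_cases hs : v ∈ S
          · exact Or.inr (Or.inr ⟨hs, fun hy => hnc2 hy.2⟩)
          · exact Or.inl ⟨hv1, fun h' => h'.elim hvt hs⟩
        · exact Or.inr (Or.inl hvx)
      · intro h
        have hvM : v ∈ coversVerts M := by
          rw [hMc]
          rcases h with ⟨hv1, hvts⟩ | hvx | ⟨hvs, _⟩
          · exact Or.inl ⟨Or.inl hv1, fun ht => hvts (Or.inl ht)⟩
          · exact Or.inr hvx
          · exact Or.inl ⟨Or.inl (hSV₁ hvs), fun ht => hTnS v ht hvs⟩
        rw [hcov] at hvM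
        rcases hvM with h1 | h2
        · exact h1
        · exfalso
          rcases h with ⟨hv1, hvts⟩ | hvx | ⟨hvs, hvy⟩
          · rw [hcov₂] at h2
            rcases h2 with ⟨hv2, hvs⟩ | hy
            · exact hvs ((hSmem v).mpr ⟨hv1, hv2⟩)
            · exact hvts (Or.inr (hYS hy))
          · have ht := hXT hvx
            exact hTnV₂ v ht (hc₂ h2)
          · exact hvy ⟨hvs, h2⟩
    refine ⟨Y, hYS, ⟨hYS, M₂, ⟨hM2e, fun e he f hf hef v hv => hMd e (hM₂M he) f (hM₂M hf) hef v hv⟩, hcov₂⟩,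
      ⟨?_, M₁, ⟨fun e he => he.2, fun e he f hf hef v hv => hMd e (hM₁M he) f (hM₁M hf) hef v hv⟩, hcov₁⟩⟩
    rintro v (hvx | ⟨hvs, _⟩)
    · exact Or.inl (hXT hvx)
    · exact Or.inr hvs
  · rintro ⟨Y, hYS, ⟨_, M₂, ⟨h2e, h2d⟩, h2c⟩, hsub, M₁, ⟨h1e, h1d⟩, h1c⟩
    have hc₁ : coversVerts M₁ ⊆ G₁.verts := by
      rintro v ⟨e, he, hv⟩
      rcases h1e e he with ⟨u, w, hadj, rfl⟩
      rcases Sym2.mem_iff.mp hv with rfl | rfl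
      · exact (G₁.mem_of_adj _ _ hadj).1
      · exact (G₁.mem_of_adj _ _ hadj).2
    have hc₂ : coversVerts M₂ ⊆ G₂.verts := by
      rintro v ⟨e, he, hv⟩
      rcases h2e e he with ⟨u, w, hadj, rfl⟩
      rcases Sym2.mem_iff.mp hv with rfl | rfl
      · exact (G₂.mem_of_adj _ _ hadj).1
      · exact (G₂.mem_of_adj _ _ hadj).2
    have hdisj : ∀ v, v ∈ coversVerts M₁ → v ∈ coversVerts M₂ → False := by
      intro v h1 h2
      rw [h1c] at h1
      rw [h2c] at h2
      rcases h2 with ⟨hv2, hvs⟩ | hy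
      · have hv1 : v ∈ G₁.verts := by
          rcases h1 with ⟨hv1, _⟩ | hvx | ⟨hvs', _⟩
          · exact hv1
          · exact hTV₁ v (hX hvx)
          · exact hSV₁ hvs'
        exact hvs ((hSmem v).mpr ⟨hv1, hv2⟩)
      · have hvS : v ∈ S := hYS hy
        rcases h1 with ⟨_, hvts⟩ | hvx | ⟨_, hvy⟩
        · exact hvts (Or.inr hvS)
        · exact hTnS v (hX hvx) hvS
        · exact hvy hy
    refine ⟨hX, M₁ ∪ M₂, ⟨?_, ?_⟩, ?_⟩
    · rintro e (he | he)
      · rcases h1e e he with ⟨u, w, h, rfl⟩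
        exact ⟨u, w, Or.inl h, rfl⟩
      · rcases h2e e he with ⟨u, w, h, rfl⟩
        exact ⟨u, w, Or.inr h, rfl⟩
    · rintro e (he | he) f (hf | hf) hef v hve hvf
      · exact h1d e he f hf hef v hve hvf
      · exact hdisj v ⟨e, he, hve⟩ ⟨f, hf, hvf⟩
      · exact hdisj v ⟨f, hf, hvf⟩ ⟨e, he, hve⟩
      · exact h2d e he f hf hef v hve hvf
    · have hcovU : coversVerts (M₁ ∪ M₂) = coversVerts M₁ ∪ coversVerts M₂ := by
        ext v
        constructor
        · rintro ⟨e, (he | he), hv⟩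
          · exact Or.inl ⟨e, he, hv⟩
          · exact Or.inr ⟨e, he, hv⟩
        · rintro (⟨e, he, hv⟩ | ⟨e, he, hv⟩)
          · exact ⟨e, Or.inl he, hv⟩
          · exact ⟨e, Or.inr he, hv⟩
      rw [hcovU, h1c, h2c]
      ext v
      constructor
      · rintro (h | h)
        · rcases h with ⟨hv1, hvts⟩ | hvx | ⟨hvs, _⟩
          · exact Or.inl ⟨Or.inl hv1, fun ht => hvts (Or.inl ht)⟩
          · exact Or.inr hvx
          · exact Or.inl ⟨Or.inl (hSV₁ hvs), fun ht => hTnS v ht hvs⟩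
        · rcases h with ⟨hv2, hvs⟩ | hy
          · exact Or.inl ⟨Or.inr hv2, fun ht => hvs ((hSmem v).mpr ⟨hTV₁ v ht, hv2⟩)⟩
          · exact Or.inl ⟨Or.inl (hSV₁ (hYS hy)), fun ht => hTnS v ht (hYS hy)⟩
      · rintro (⟨hv12, hvt⟩ | hvx)
        · by_cases hs : v ∈ S
          · by_cases hy : v ∈ Y
            · exact Or.inr (Or.inr hy)
            · exact Or.inl (Or.inr (Or.inr ⟨hs, hy⟩))
          · rcases hv12 with hv1 | hv2
            · exact Or.inl (Or.inl ⟨hv1, fun h' => h'.elim hvt hs⟩)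
            · exact Or.inr (Or.inl ⟨hv2, hs⟩)
        · exact Or.inl (Or.inr (Or.inl hvx))
end

section
/- Let T be a set with |T| ≤ 3, and let F be a nonempty family of subsets of T in which all members have the same cardinality parity. Then there exists a finite simple graph G' containing T whose matching pattern on T equals F, and moreover, for each X ∈ F there is exactly one matching of G' that covers exactly (V(G') ∖ T) ∪ X. -/
-- helpers
lemma mem_covers {V : Type} {M : Set (Sym2 V)} {x : V} :
    x ∈ coversVerts M ↔ ∃ e ∈ M, x ∈ e := Iff.rfl

lemma covers_one {V : Type} (x y : V) : coversVerts {s(x,y)} = {x, y} := by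
  ext z; simp [coversVerts, Sym2.mem_iff]

lemma covers_two {V : Type} (x y z t : V) :
    coversVerts {s(x,y), s(z,t)} = {x, y, z, t} := by
  ext w; simp [coversVerts, Sym2.mem_iff]; tauto

lemma covers_three {V : Type} (x y z t p q : V) :
    coversVerts {s(x,y), s(z,t), s(p,q)} = {x, y, z, t, p, q} := by
  ext w; simp [coversVerts, Sym2.mem_iff]; tauto

lemma matching_eq_of_mem {V : Type} {G : FinGraph V} {M : Set (Sym2 V)}
    (hM : G.IsMatching M) {e f : Sym2 V} (he : e ∈ M) (hf : f ∈ M) {x : V}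
    (hxe : x ∈ e) (hxf : x ∈ f) : e = f := by
  by_contra h
  exact hM.2 e he f hf h x hxe hxf

lemma isMatching_single {V : Type} (G : FinGraph V) {x y : V} (h : G.Adj x y) :
    G.IsMatching {s(x,y)} := by
  constructor
  · rintro e he; exact ⟨x, y, h, by simpa using he⟩
  · intro e he f hf hef
    simp only [Set.mem_singleton_iff] at he hf
    exact absurd (he.trans hf.symm) hef

lemma isMatching_two {V : Type} (G : FinGraph V) {x y z t : V}
    (h1 : G.Adj x y) (h2 : G.Adj z t)
    (hxz : x ≠ z) (hxt : x ≠ t) (hyz : y ≠ z) (hyt : y ≠ t) :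
    G.IsMatching {s(x,y), s(z,t)} := by
  constructor
  · rintro e he
    rcases he with rfl | he
    · exact ⟨x, y, h1, rfl⟩
    · exact ⟨z, t, h2, by simpa using he⟩
  · intro e he f hf hef w hwe hwf
    simp only [Set.mem_insert_iff, Set.mem_singleton_iff] at he hf
    rcases he with rfl | rfl <;> rcases hf with rfl | rfl <;>
      first
        | exact absurd rfl hef
        | (simp only [Sym2.mem_iff] at hwe hwf
           rcases hwe with rfl | rfl <;> rcases hwf with rfl | rfl <;> simp_all)

lemma isMatching_three {V : Type} (G : FinGraph V) {x y z t p q : V}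
    (h1 : G.Adj x y) (h2 : G.Adj z t) (h3 : G.Adj p q)
    (hxz : x ≠ z) (hxt : x ≠ t) (hyz : y ≠ z) (hyt : y ≠ t)
    (hxp : x ≠ p) (hxq : x ≠ q) (hyp : y ≠ p) (hyq : y ≠ q)
    (hzp : z ≠ p) (hzq : z ≠ q) (htp : t ≠ p) (htq : t ≠ q) :
    G.IsMatching {s(x,y), s(z,t), s(p,q)} := by
  constructor
  · rintro e he
    rcases he with rfl | rfl | he
    · exact ⟨x, y, h1, rfl⟩
    · exact ⟨z, t, h2, rfl⟩
    · exact ⟨p, q, h3, by simpa using he⟩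
  · intro e he f hf hef w hwe hwf
    simp only [Set.mem_insert_iff, Set.mem_singleton_iff] at he hf
    rcases he with rfl | rfl | rfl <;> rcases hf with rfl | rfl | rfl <;>
      first
        | exact absurd rfl hef
        | (simp only [Sym2.mem_iff] at hwe hwf
           rcases hwe with rfl | rfl <;> rcases hwf with rfl | rfl <;> simp_all)

lemma union_cancel {V : Type} {N X D : Set V} (h : N ∪ X = N ∪ D)
    (hX : ∀ x ∈ X, x ∉ N) (hD : ∀ x ∈ D, x ∉ N) : X = D := by
  ext x
  constructor
  · intro hx
    have hm : x ∈ N ∪ D := by rw [← h]; exact Or.inr hx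
    rcases hm with hm | hm
    · exact absurd hm (hX x hx)
    · exact hm
  · intro hx
    have hm : x ∈ N ∪ X := by rw [h]; exact Or.inr hx
    rcases hm with hm | hm
    · exact absurd hm (hD x hx)
    · exact hm
lemma lemE {V : Type} {T : Set V} (hTfin : T.Finite) {u v : V}
    (hu : u ∉ T) (hv : v ∉ T) (huv : u ≠ v)
    {A B : Set V} (hA : A ⊆ T) (hB : B ⊆ T) (e0 : Prop)
    (hAB : (A ∩ B).Subsingleton) :
    ∃ G' : FinGraph V, T ⊆ G'.verts ∧
      G'.matchingPattern T =
        {X | (e0 ∧ X = ∅) ∨ ∃ t, t ∈ A ∧ ∃ t', t' ∈ B ∧ t ≠ t' ∧ X = {t, t'}} ∧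
      ∀ X ∈ G'.matchingPattern T,
        ∃! M : Set (Sym2 V), G'.IsMatching M ∧ coversVerts M = (G'.verts \ T) ∪ X := by
  classical
  set Adj : V → V → Prop := fun x y =>
    (e0 ∧ ((x = u ∧ y = v) ∨ (x = v ∧ y = u))) ∨
    (x ∈ A ∧ y = u) ∨ (x = u ∧ y ∈ A) ∨ (x ∈ B ∧ y = v) ∨ (x = v ∧ y ∈ B) with hAdjdef
  obtain ⟨G, hGv, hGadj⟩ : ∃ G : FinGraph V, G.verts = T ∪ {u, v} ∧ G.Adj = Adj := by
    refine ⟨{ verts := T ∪ {u, v}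
              finite := hTfin.union ((Set.finite_singleton v).insert u)
              Adj := Adj
              symm := by intro x y h; rw [hAdjdef] at *; tauto
              irrefl := by
                rintro x (⟨_, ⟨rfl, h⟩ | ⟨rfl, h⟩⟩ | ⟨hxA, rfl⟩ | ⟨rfl, hxA⟩ | ⟨hxB, rfl⟩ | ⟨rfl, hxB⟩)
                · exact huv h
                · exact huv h.symm
                · exact hu (hA hxA)
                · exact hu (hA hxA)
                · exact hv (hB hxB)
                · exact hv (hB hxB)
              mem_of_adj := by
                rintro x y (⟨_, ⟨rfl, rfl⟩ | ⟨rfl, rfl⟩⟩ | ⟨hxA, rfl⟩ | ⟨rfl, hyA⟩ | ⟨hxB, rfl⟩ | ⟨rfl, hyB⟩)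
                · exact ⟨Or.inr (Or.inl rfl), Or.inr (Or.inr rfl)⟩
                · exact ⟨Or.inr (Or.inr rfl), Or.inr (Or.inl rfl)⟩
                · exact ⟨Or.inl (hA hxA), Or.inr (Or.inl rfl)⟩
                · exact ⟨Or.inr (Or.inl rfl), Or.inl (hA hyA)⟩
                · exact ⟨Or.inl (hB hxB), Or.inr (Or.inr rfl)⟩
                · exact ⟨Or.inr (Or.inr rfl), Or.inl (hB hyB)⟩ }, rfl, rfl⟩
  have hvd : G.verts \ T = {u, v} := by
    rw [hGv]; ext x
    simp only [Set.mem_diff, Set.mem_union, Set.mem_insert_iff, Set.mem_singleton_iff]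
    constructor
    · rintro ⟨hx | hx, hxT⟩
      · exact absurd hx hxT
      · exact hx
    · rintro (rfl | rfl)
      · exact ⟨Or.inr (Or.inl rfl), hu⟩
      · exact ⟨Or.inr (Or.inr rfl), hv⟩
  have forms : ∀ {M : Set (Sym2 V)}, G.IsMatching M → ∀ e ∈ M,
      (e0 ∧ e = s(u,v)) ∨ (∃ t, t ∈ A ∧ e = s(t,u)) ∨ (∃ t, t ∈ B ∧ e = s(t,v)) := by
    intro M hM e heM
    obtain ⟨x, y, hxy, rfl⟩ := hM.1 e heM
    rw [hGadj] at hxy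
    rcases hxy with ⟨he, ⟨rfl, rfl⟩ | ⟨rfl, rfl⟩⟩ | ⟨hxA, rfl⟩ | ⟨rfl, hyA⟩ | ⟨hxB, rfl⟩ | ⟨rfl, hyB⟩
    · exact Or.inl ⟨he, rfl⟩
    · exact Or.inl ⟨he, Sym2.eq_swap⟩
    · exact Or.inr (Or.inl ⟨x, hxA, rfl⟩)
    · exact Or.inr (Or.inl ⟨y, hyA, Sym2.eq_swap⟩)
    · exact Or.inr (Or.inr ⟨x, hxB, rfl⟩)
    · exact Or.inr (Or.inr ⟨y, hyB, Sym2.eq_swap⟩)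
  have key : ∀ M X, G.IsMatching M → X ⊆ T → coversVerts M = {u, v} ∪ X →
      (e0 ∧ X = ∅ ∧ M = {s(u,v)}) ∨
      (∃ t t', t ∈ A ∧ t' ∈ B ∧ t ≠ t' ∧ X = {t, t'} ∧ M = {s(t,u), s(t',v)}) := by
    intro M X hM hXT hcov
    have hXuv : ∀ x ∈ X, x ≠ u ∧ x ≠ v := fun x hx =>
      ⟨fun h => hu (h ▸ hXT hx), fun h => hv (h ▸ hXT hx)⟩
    have hucov : u ∈ coversVerts M := by rw [hcov]; exact Or.inl (Or.inl rfl)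
    obtain ⟨e, heM, hue⟩ := hucov
    rcases forms hM e heM with ⟨he0, rfl⟩ | ⟨t, htA, rfl⟩ | ⟨t, htB, rfl⟩
    · -- e = s(u,v)
      left
      have hMe : M = {s(u,v)} := by
        ext f
        simp only [Set.mem_singleton_iff]
        constructor
        · intro hf
          rcases forms hM f hf with ⟨_, rfl⟩ | ⟨t, htA, rfl⟩ | ⟨t, htB, rfl⟩
          · rfl
          · exact matching_eq_of_mem hM hf heM (Sym2.mem_mk_right t u) (Sym2.mem_mk_left u v)
          · exact matching_eq_of_mem hM hf heM (Sym2.mem_mk_right t v) (Sym2.mem_mk_right u v)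
        · rintro rfl; exact heM
      have hXempty : X = ∅ := by
        ext x
        simp only [Set.mem_empty_iff_false, iff_false]
        intro hx
        have hxc : x ∈ coversVerts M := by rw [hcov]; exact Or.inr hx
        rw [hMe, covers_one] at hxc
        rcases hxc with h | h
        · exact (hXuv x hx).1 h
        · exact (hXuv x hx).2 h
      exact ⟨he0, hXempty, hMe⟩
    · -- e = s(t,u)
      have htT : t ∈ T := hA htA
      have hvcov : v ∈ coversVerts M := by rw [hcov]; exact Or.inl (Or.inr rfl)
      obtain ⟨f, hfM, hvf⟩ := hvcov
      rcases forms hM f hfM with ⟨_, rfl⟩ | ⟨t'', ht'', rfl⟩ | ⟨t', ht'B, rfl⟩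
      · exfalso
        have hef := matching_eq_of_mem hM heM hfM (Sym2.mem_mk_right t u) (Sym2.mem_mk_left u v)
        rcases Sym2.eq_iff.mp hef with ⟨h1, h2⟩ | ⟨h1, h2⟩
        · exact huv h2
        · exact hv (by rw [← h1]; exact htT)
      · exfalso
        rcases Sym2.mem_iff.mp hvf with h | h
        · exact hv (by rw [h]; exact hA ht'')
        · exact huv h.symm
      · right
        have ht'T : t' ∈ T := hB ht'B
        have hef : s(t,u) ≠ s(t',v) := by
          intro h
          rcases Sym2.eq_iff.mp h with ⟨h1, h2⟩ | ⟨h1, h2⟩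
          · exact huv h2
          · exact hu (by rw [h2]; exact ht'T)
        have htt' : t ≠ t' := by
          intro h
          exact hM.2 _ heM _ hfM hef t (Sym2.mem_mk_left t u)
            (by rw [h]; exact Sym2.mem_mk_left t' v)
        have hMef : M = {s(t,u), s(t',v)} := by
          ext g
          simp only [Set.mem_insert_iff, Set.mem_singleton_iff]
          constructor
          · intro hg
            rcases forms hM g hg with ⟨_, rfl⟩ | ⟨s1, hs1, rfl⟩ | ⟨s2, hs2, rfl⟩
            · exfalso
              have h := matching_eq_of_mem hM hg heM (Sym2.mem_mk_left u v) (Sym2.mem_mk_right t u)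
              rcases Sym2.eq_iff.mp h with ⟨h1, h2⟩ | ⟨h1, h2⟩
              · exact hu (by rw [h1]; exact htT)
              · exact hv (by rw [h2]; exact htT)
            · exact Or.inl (matching_eq_of_mem hM hg heM (Sym2.mem_mk_right s1 u) (Sym2.mem_mk_right t u))
            · exact Or.inr (matching_eq_of_mem hM hg hfM (Sym2.mem_mk_right s2 v) (Sym2.mem_mk_right t' v))
          · rintro (rfl | rfl)
            exacts [heM, hfM]
        have h1 : ({u, v} : Set V) ∪ X = {t, u, t', v} := by rw [← hcov, hMef, covers_two]
        have hX : X = {t, t'} := by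
          apply Set.eq_of_subset_of_subset
          · intro x hx
            have hmem : x ∈ ({t, u, t', v} : Set V) := by rw [← h1]; exact Or.inr hx
            obtain ⟨hxu, hxv⟩ := hXuv x hx
            simp only [Set.mem_insert_iff, Set.mem_singleton_iff] at hmem ⊢
            tauto
          · intro x hx
            simp only [Set.mem_insert_iff, Set.mem_singleton_iff] at hx
            have hmem : x ∈ ({u, v} : Set V) ∪ X := by
              rw [h1]
              simp only [Set.mem_insert_iff, Set.mem_singleton_iff]
              tauto
            rcases hmem with hm | hm
            · exfalso
              have hxT : x ∈ T := by rcases hx with rfl | rfl; exacts [htT, ht'T]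
              rcases hm with rfl | rfl
              exacts [hu hxT, hv hxT]
            · exact hm
        exact ⟨t, t', htA, ht'B, htt', hX, hMef⟩
    · -- e = s(t,v), contains u: impossible
      exfalso
      rcases Sym2.mem_iff.mp hue with h | h
      · exact hu (by rw [h]; exact hB htB)
      · exact huv h
  refine ⟨G, by rw [hGv]; exact Set.subset_union_left, ?_, ?_⟩
  · ext X
    simp only [FinGraph.matchingPattern, Set.mem_setOf_eq]
    constructor
    · rintro ⟨hXT, M, hM, hcov⟩
      rw [hvd] at hcov
      rcases key M X hM hXT hcov with ⟨he0, hX, _⟩ | ⟨t, t', htA, ht'B, htt', hX, _⟩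
      · exact Or.inl ⟨he0, hX⟩
      · exact Or.inr ⟨t, htA, t', ht'B, htt', hX⟩
    · rintro (⟨he0, rfl⟩ | ⟨t, htA, t', ht'B, htt', rfl⟩)
      · refine ⟨Set.empty_subset T, {s(u,v)}, isMatching_single G ?_, ?_⟩
        · rw [hGadj]; exact Or.inl ⟨he0, Or.inl ⟨rfl, rfl⟩⟩
        · rw [covers_one, hvd, Set.union_empty]
      · refine ⟨?_, {s(t,u), s(t',v)}, ?_, ?_⟩
        · rintro x (rfl | hx)
          · exact hA htA
          · rw [Set.mem_singleton_iff] at hx; rw [hx]; exact hB ht'B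
        · refine isMatching_two G ?_ ?_ htt' (fun h => hv (h ▸ hA htA)) (fun h => hu (by rw [h]; exact hB ht'B)) huv
          · rw [hGadj]; exact Or.inr (Or.inl ⟨htA, rfl⟩)
          · rw [hGadj]; exact Or.inr (Or.inr (Or.inr (Or.inl ⟨ht'B, rfl⟩)))
        · rw [covers_two, hvd]
          ext x
          simp only [Set.mem_insert_iff, Set.mem_singleton_iff, Set.mem_union]
          tauto
  · intro X hXp
    obtain ⟨hXT, M, hM, hcov⟩ := hXp
    refine ⟨M, ⟨hM, hcov⟩, ?_⟩
    rintro M' ⟨hM', hcov'⟩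
    rw [hvd] at hcov hcov'
    rcases key M X hM hXT hcov with ⟨_, hX1, hMe⟩ | ⟨t, t', htA, ht'B, htt', hX1, hMe⟩ <;>
      rcases key M' X hM' hXT hcov' with ⟨_, hX2, hMe'⟩ | ⟨s1, s2, hs1, hs2, hss, hX2, hMe'⟩
    · rw [hMe', hMe]
    · exfalso
      have h : (∅ : Set V) = {s1, s2} := hX1.symm.trans hX2
      exact absurd ((Set.ext_iff.mp h s1).mpr (Or.inl rfl)) (Set.notMem_empty s1)
    · exfalso
      have h : (∅ : Set V) = {t, t'} := hX2.symm.trans hX1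
      exact absurd ((Set.ext_iff.mp h t).mpr (Or.inl rfl)) (Set.notMem_empty t)
    · rw [hMe, hMe']
      rcases Set.pair_eq_pair_iff.mp (hX1.symm.trans hX2) with ⟨h1, h2⟩ | ⟨h1, h2⟩
      · rw [h1, h2]
      · exfalso
        have htB : t ∈ B := by rw [h1]; exact hs2
        have ht'A : t' ∈ A := by rw [h2]; exact hs1
        exact htt' (hAB ⟨htA, htB⟩ ⟨ht'A, ht'B⟩)
lemma lemStar {V : Type} {T : Set V} (hTfin : T.Finite) {u : V} (hu : u ∉ T)
    {S : Set V} (hS : S ⊆ T) :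
    ∃ G' : FinGraph V, T ⊆ G'.verts ∧
      G'.matchingPattern T = {X | ∃ t, t ∈ S ∧ X = {t}} ∧
      ∀ X ∈ G'.matchingPattern T,
        ∃! M : Set (Sym2 V), G'.IsMatching M ∧ coversVerts M = (G'.verts \ T) ∪ X := by
  classical
  set Adj : V → V → Prop := fun x y => (x ∈ S ∧ y = u) ∨ (x = u ∧ y ∈ S) with hAdjdef
  obtain ⟨G, hGv, hGadj⟩ : ∃ G : FinGraph V, G.verts = T ∪ {u} ∧ G.Adj = Adj := by
    refine ⟨{ verts := T ∪ {u}
              finite := hTfin.union (Set.finite_singleton u)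
              Adj := Adj
              symm := by intro x y h; rw [hAdjdef] at *; tauto
              irrefl := by
                rintro x (⟨hxS, rfl⟩ | ⟨rfl, hxS⟩) <;> exact hu (hS hxS)
              mem_of_adj := by
                rintro x y (⟨hxS, rfl⟩ | ⟨rfl, hyS⟩)
                · exact ⟨Or.inl (hS hxS), Or.inr rfl⟩
                · exact ⟨Or.inr rfl, Or.inl (hS hyS)⟩ }, rfl, rfl⟩
  have hvd : G.verts \ T = {u} := by
    rw [hGv]; ext x
    simp only [Set.mem_diff, Set.mem_union, Set.mem_singleton_iff]
    constructor
    · rintro ⟨hx | hx, hxT⟩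
      · exact absurd hx hxT
      · exact hx
    · rintro rfl
      exact ⟨Or.inr rfl, hu⟩
  have forms : ∀ {M : Set (Sym2 V)}, G.IsMatching M → ∀ e ∈ M,
      ∃ t, t ∈ S ∧ e = s(t, u) := by
    intro M hM e heM
    obtain ⟨x, y, hxy, rfl⟩ := hM.1 e heM
    rw [hGadj] at hxy
    rcases hxy with ⟨hxS, rfl⟩ | ⟨rfl, hyS⟩
    · exact ⟨x, hxS, rfl⟩
    · exact ⟨y, hyS, Sym2.eq_swap⟩
  have key : ∀ M X, G.IsMatching M → X ⊆ T → coversVerts M = {u} ∪ X →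
      ∃ t, t ∈ S ∧ X = {t} ∧ M = {s(t, u)} := by
    intro M X hM hXT hcov
    have hXu : ∀ x ∈ X, x ≠ u := fun x hx h => hu (h ▸ hXT hx)
    have hucov : u ∈ coversVerts M := by rw [hcov]; exact Or.inl rfl
    obtain ⟨e, heM, hue⟩ := hucov
    obtain ⟨t, htS, rfl⟩ := forms hM e heM
    have htT : t ∈ T := hS htS
    have hMe : M = {s(t, u)} := by
      ext f
      simp only [Set.mem_singleton_iff]
      constructor
      · intro hf
        obtain ⟨t', ht'S, rfl⟩ := forms hM f hf
        exact matching_eq_of_mem hM hf heM (Sym2.mem_mk_right t' u) (Sym2.mem_mk_right t u)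
      · rintro rfl; exact heM
    have h1 : ({u} : Set V) ∪ X = {t, u} := by rw [← hcov, hMe, covers_one]
    have hX : X = {t} := by
      apply Set.eq_of_subset_of_subset
      · intro x hx
        have hmem : x ∈ ({t, u} : Set V) := by rw [← h1]; exact Or.inr hx
        rcases hmem with h | h
        · exact h
        · exact absurd h (hXu x hx)
      · intro x hx
        rw [Set.mem_singleton_iff] at hx
        subst hx
        have hmem : x ∈ ({u} : Set V) ∪ X := by rw [h1]; exact Or.inl rfl
        rcases hmem with hm | hm
        · exact absurd (hm ▸ htT) hu
        · exact hm
    exact ⟨t, htS, hX, hMe⟩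
  refine ⟨G, by rw [hGv]; exact Set.subset_union_left, ?_, ?_⟩
  · ext X
    simp only [FinGraph.matchingPattern, Set.mem_setOf_eq]
    constructor
    · rintro ⟨hXT, M, hM, hcov⟩
      rw [hvd] at hcov
      obtain ⟨t, htS, hX, _⟩ := key M X hM hXT hcov
      exact ⟨t, htS, hX⟩
    · rintro ⟨t, htS, rfl⟩
      refine ⟨by intro x hx; rw [Set.mem_singleton_iff] at hx; rw [hx]; exact hS htS,
        {s(t, u)}, isMatching_single G ?_, ?_⟩
      · rw [hGadj]; exact Or.inl ⟨htS, rfl⟩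
      · rw [covers_one, hvd]
        ext x
        simp only [Set.mem_insert_iff, Set.mem_singleton_iff, Set.mem_union]
        tauto
  · intro X hXp
    obtain ⟨hXT, M, hM, hcov⟩ := hXp
    refine ⟨M, ⟨hM, hcov⟩, ?_⟩
    rintro M' ⟨hM', hcov'⟩
    rw [hvd] at hcov hcov'
    obtain ⟨t, htS, hX, hMe⟩ := key M X hM hXT hcov
    obtain ⟨t', ht'S, hX', hMe'⟩ := key M' X hM' hXT hcov'
    have : t' = t := by
      have h := hX.symm.trans hX'
      exact (Set.singleton_eq_singleton_iff.mp h).symm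
    rw [hMe', hMe, this]
set_option maxHeartbeats 2000000 in
lemma lemTriple {V : Type} {T : Set V} (hTfin : T.Finite)
    {a b c u v w : V} (haT : a ∈ T) (hbT : b ∈ T) (hcT : c ∈ T)
    (hab : a ≠ b) (hac : a ≠ c) (hbc : b ≠ c)
    (hu : u ∉ T) (hv : v ∉ T) (hw : w ∉ T)
    (huv : u ≠ v) (huw : u ≠ w) (hvw : v ≠ w)
    (sa sb sc : Prop) :
    ∃ G' : FinGraph V, T ⊆ G'.verts ∧
      G'.matchingPattern T =
        {X | X = {a, b, c} ∨ (sa ∧ X = {a}) ∨ (sb ∧ X = {b}) ∨ (sc ∧ X = {c})} ∧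
      ∀ X ∈ G'.matchingPattern T,
        ∃! M : Set (Sym2 V), G'.IsMatching M ∧ coversVerts M = (G'.verts \ T) ∪ X := by
  classical
  have ne1 : ∀ {x y : V}, x ∈ T → y ∉ T → x ≠ y := fun hx hy h => hy (h ▸ hx)
  have ne2 : ∀ {x y : V}, x ∈ T → y ∉ T → y ≠ x := fun hx hy h => hy (h.symm ▸ hx)
  set R : V → V → Prop := fun x y =>
    (x = a ∧ y = u) ∨ (x = b ∧ y = v) ∨ (x = c ∧ y = w) ∨
    (sa ∧ x = v ∧ y = w) ∨ (sb ∧ x = u ∧ y = w) ∨ (sc ∧ x = u ∧ y = v) with hRdef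
  set Adj : V → V → Prop := fun x y => R x y ∨ R y x with hAdjdef
  have hRmem : ∀ x y, R x y → x ∈ T ∪ {u, v, w} ∧ y ∈ T ∪ {u, v, w} := by
    rintro x y (⟨rfl, rfl⟩ | ⟨rfl, rfl⟩ | ⟨rfl, rfl⟩ | ⟨_, rfl, rfl⟩ | ⟨_, rfl, rfl⟩ | ⟨_, rfl, rfl⟩)
    · exact ⟨Or.inl haT, Or.inr (Or.inl rfl)⟩
    · exact ⟨Or.inl hbT, Or.inr (Or.inr (Or.inl rfl))⟩
    · exact ⟨Or.inl hcT, Or.inr (Or.inr (Or.inr rfl))⟩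
    · exact ⟨Or.inr (Or.inr (Or.inl rfl)), Or.inr (Or.inr (Or.inr rfl))⟩
    · exact ⟨Or.inr (Or.inl rfl), Or.inr (Or.inr (Or.inr rfl))⟩
    · exact ⟨Or.inr (Or.inl rfl), Or.inr (Or.inr (Or.inl rfl))⟩
  obtain ⟨G, hGv, hGadj⟩ : ∃ G : FinGraph V, G.verts = T ∪ {u, v, w} ∧ G.Adj = Adj := by
    refine ⟨{ verts := T ∪ {u, v, w}
              finite := hTfin.union (((Set.finite_singleton w).insert v).insert u)
              Adj := Adj
              symm := fun x y h => Or.symm h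
              irrefl := by
                have : ∀ x, ¬ R x x := by
                  rintro x (⟨rfl, h⟩ | ⟨rfl, h⟩ | ⟨rfl, h⟩ | ⟨_, rfl, h⟩ | ⟨_, rfl, h⟩ | ⟨_, rfl, h⟩)
                  · exact ne1 haT hu h
                  · exact ne1 hbT hv h
                  · exact ne1 hcT hw h
                  · exact hvw h
                  · exact huw h
                  · exact huv h
                rintro x (h | h) <;> exact this x h
              mem_of_adj := by
                rintro x y (h | h)
                · exact hRmem x y h
                · exact ⟨(hRmem y x h).2, (hRmem y x h).1⟩ }, rfl, rfl⟩
  have hTN : ∀ x ∈ T, x ∉ ({u, v, w} : Set V) := by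
    intro x hx hm
    rcases hm with rfl | rfl | rfl
    exacts [hu hx, hv hx, hw hx]
  have hvd : G.verts \ T = {u, v, w} := by
    rw [hGv]; ext x
    simp only [Set.mem_diff, Set.mem_union, Set.mem_insert_iff, Set.mem_singleton_iff]
    constructor
    · rintro ⟨hx | hx, hxT⟩
      · exact absurd hx hxT
      · exact hx
    · rintro (rfl | rfl | rfl)
      · exact ⟨Or.inr (Or.inl rfl), hu⟩
      · exact ⟨Or.inr (Or.inr (Or.inl rfl)), hv⟩
      · exact ⟨Or.inr (Or.inr (Or.inr rfl)), hw⟩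
  have forms : ∀ {M : Set (Sym2 V)}, G.IsMatching M → ∀ e ∈ M,
      e = s(a,u) ∨ e = s(b,v) ∨ e = s(c,w) ∨
      (sa ∧ e = s(v,w)) ∨ (sb ∧ e = s(u,w)) ∨ (sc ∧ e = s(u,v)) := by
    intro M hM e heM
    obtain ⟨x, y, hxy, rfl⟩ := hM.1 e heM
    rw [hGadj] at hxy
    rcases hxy with h | h <;>
      rcases h with ⟨rfl, rfl⟩ | ⟨rfl, rfl⟩ | ⟨rfl, rfl⟩ | ⟨hg, rfl, rfl⟩ | ⟨hg, rfl, rfl⟩ | ⟨hg, rfl, rfl⟩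
    · exact Or.inl rfl
    · exact Or.inr (Or.inl rfl)
    · exact Or.inr (Or.inr (Or.inl rfl))
    · exact Or.inr (Or.inr (Or.inr (Or.inl ⟨hg, rfl⟩)))
    · exact Or.inr (Or.inr (Or.inr (Or.inr (Or.inl ⟨hg, rfl⟩))))
    · exact Or.inr (Or.inr (Or.inr (Or.inr (Or.inr ⟨hg, rfl⟩))))
    · exact Or.inl Sym2.eq_swap
    · exact Or.inr (Or.inl Sym2.eq_swap)
    · exact Or.inr (Or.inr (Or.inl Sym2.eq_swap))
    · exact Or.inr (Or.inr (Or.inr (Or.inl ⟨hg, Sym2.eq_swap⟩)))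
    · exact Or.inr (Or.inr (Or.inr (Or.inr (Or.inl ⟨hg, Sym2.eq_swap⟩))))
    · exact Or.inr (Or.inr (Or.inr (Or.inr (Or.inr ⟨hg, Sym2.eq_swap⟩))))
  have formU : ∀ {M : Set (Sym2 V)}, G.IsMatching M → ∀ e ∈ M, u ∈ e →
      e = s(a,u) ∨ (sb ∧ e = s(u,w)) ∨ (sc ∧ e = s(u,v)) := by
    intro M hM e heM hue
    rcases forms hM e heM with rfl | rfl | rfl | ⟨hg, rfl⟩ | ⟨hg, rfl⟩ | ⟨hg, rfl⟩
    · exact Or.inl rfl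
    · exfalso; rcases Sym2.mem_iff.mp hue with h | h
      exacts [ne2 hbT hu h, huv h]
    · exfalso; rcases Sym2.mem_iff.mp hue with h | h
      exacts [ne2 hcT hu h, huw h]
    · exfalso; rcases Sym2.mem_iff.mp hue with h | h
      exacts [huv h, huw h]
    · exact Or.inr (Or.inl ⟨hg, rfl⟩)
    · exact Or.inr (Or.inr ⟨hg, rfl⟩)
  have formV : ∀ {M : Set (Sym2 V)}, G.IsMatching M → ∀ e ∈ M, v ∈ e →
      e = s(b,v) ∨ (sa ∧ e = s(v,w)) ∨ (sc ∧ e = s(u,v)) := by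
    intro M hM e heM hve
    rcases forms hM e heM with rfl | rfl | rfl | ⟨hg, rfl⟩ | ⟨hg, rfl⟩ | ⟨hg, rfl⟩
    · exfalso; rcases Sym2.mem_iff.mp hve with h | h
      exacts [ne2 haT hv h, huv h.symm]
    · exact Or.inl rfl
    · exfalso; rcases Sym2.mem_iff.mp hve with h | h
      exacts [ne2 hcT hv h, hvw h]
    · exact Or.inr (Or.inl ⟨hg, rfl⟩)
    · exfalso; rcases Sym2.mem_iff.mp hve with h | h
      exacts [huv h.symm, hvw h]
    · exact Or.inr (Or.inr ⟨hg, rfl⟩)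
  have formW : ∀ {M : Set (Sym2 V)}, G.IsMatching M → ∀ e ∈ M, w ∈ e →
      e = s(c,w) ∨ (sa ∧ e = s(v,w)) ∨ (sb ∧ e = s(u,w)) := by
    intro M hM e heM hwe
    rcases forms hM e heM with rfl | rfl | rfl | ⟨hg, rfl⟩ | ⟨hg, rfl⟩ | ⟨hg, rfl⟩
    · exfalso; rcases Sym2.mem_iff.mp hwe with h | h
      exacts [ne2 haT hw h, huw h.symm]
    · exfalso; rcases Sym2.mem_iff.mp hwe with h | h
      exacts [ne2 hbT hw h, hvw h.symm]
    · exact Or.inl rfl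
    · exact Or.inr (Or.inl ⟨hg, rfl⟩)
    · exact Or.inr (Or.inr ⟨hg, rfl⟩)
    · exfalso; rcases Sym2.mem_iff.mp hwe with h | h
      exacts [huw h.symm, hvw h.symm]
  have key : ∀ M X, G.IsMatching M → X ⊆ T → coversVerts M = {u, v, w} ∪ X →
      (X = {a, b, c} ∧ M = {s(a,u), s(b,v), s(c,w)}) ∨
      (sa ∧ X = {a} ∧ M = {s(a,u), s(v,w)}) ∨
      (sb ∧ X = {b} ∧ M = {s(b,v), s(u,w)}) ∨
      (sc ∧ X = {c} ∧ M = {s(c,w), s(u,v)}) := by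
    intro M X hM hXT hcov
    have hXN : ∀ x ∈ X, x ∉ ({u, v, w} : Set V) := fun x hx => hTN x (hXT hx)
    have hUc : u ∈ coversVerts M := by rw [hcov]; exact Or.inl (Or.inl rfl)
    have hVc : v ∈ coversVerts M := by rw [hcov]; exact Or.inl (Or.inr (Or.inl rfl))
    have hWc : w ∈ coversVerts M := by rw [hcov]; exact Or.inl (Or.inr (Or.inr rfl))
    obtain ⟨eU, hUM, hUu⟩ := hUc
    obtain ⟨eV, hVM, hVv⟩ := hVc
    obtain ⟨eW, hWM, hWw⟩ := hWc
    rcases formU hM eU hUM hUu with rfl | ⟨hsb, rfl⟩ | ⟨hsc, rfl⟩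
    · -- eU = s(a,u)
      rcases formV hM eV hVM hVv with rfl | ⟨hsa, rfl⟩ | ⟨hsc, rfl⟩
      · -- eV = s(b,v)
        rcases formW hM eW hWM hWw with rfl | ⟨hsa, rfl⟩ | ⟨hsb, rfl⟩
        · -- triple
          left
          have hMeq : M = {s(a,u), s(b,v), s(c,w)} := by
            ext g
            constructor
            · intro hg
              rcases forms hM g hg with rfl | rfl | rfl | ⟨_, rfl⟩ | ⟨_, rfl⟩ | ⟨_, rfl⟩
              · exact Or.inl rfl
              · exact Or.inr (Or.inl rfl)
              · exact Or.inr (Or.inr rfl)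
              · have h := matching_eq_of_mem hM hg hVM (Sym2.mem_mk_left v w) (Sym2.mem_mk_right b v)
                rw [h]; exact Or.inr (Or.inl rfl)
              · have h := matching_eq_of_mem hM hg hUM (Sym2.mem_mk_left u w) (Sym2.mem_mk_right a u)
                rw [h]; exact Or.inl rfl
              · have h := matching_eq_of_mem hM hg hUM (Sym2.mem_mk_left u v) (Sym2.mem_mk_right a u)
                rw [h]; exact Or.inl rfl
            · rintro (rfl | rfl | hg)
              · exact hUM
              · exact hVM
              · rw [Set.mem_singleton_iff] at hg; rw [hg]; exact hWM
          have h1 : ({u,v,w} : Set V) ∪ X = ({u,v,w} : Set V) ∪ {a,b,c} := by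
            rw [← hcov, hMeq, covers_three]
            ext x
            simp only [Set.mem_insert_iff, Set.mem_singleton_iff, Set.mem_union]
            tauto
          refine ⟨union_cancel h1 hXN ?_, hMeq⟩
          intro x hx
          rcases hx with rfl | rfl | rfl
          exacts [hTN _ haT, hTN _ hbT, hTN _ hcT]
        · -- eW = s(v,w) clashes with eV = s(b,v)
          exfalso
          have h := matching_eq_of_mem hM hVM hWM (Sym2.mem_mk_right b v) (Sym2.mem_mk_left v w)
          rcases Sym2.eq_iff.mp h with ⟨h1, _⟩ | ⟨h1, _⟩
          exacts [ne1 hbT hv h1, ne1 hbT hw h1]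
        · -- eW = s(u,w) clashes with eU = s(a,u)
          exfalso
          have h := matching_eq_of_mem hM hUM hWM (Sym2.mem_mk_right a u) (Sym2.mem_mk_left u w)
          rcases Sym2.eq_iff.mp h with ⟨h1, _⟩ | ⟨h1, _⟩
          exacts [ne1 haT hu h1, ne1 haT hw h1]
      · -- eV = s(v,w)
        rcases formW hM eW hWM hWw with rfl | ⟨hsa', rfl⟩ | ⟨hsb, rfl⟩
        · -- eW = s(c,w) clashes with eV = s(v,w)
          exfalso
          have h := matching_eq_of_mem hM hVM hWM (Sym2.mem_mk_right v w) (Sym2.mem_mk_right c w)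
          rcases Sym2.eq_iff.mp h with ⟨h1, _⟩ | ⟨h1, _⟩
          exacts [ne2 hcT hv h1, hvw h1]
        · -- eW = s(v,w) = eV : good pair (a)
          right; left
          have hMeq : M = {s(a,u), s(v,w)} := by
            ext g
            constructor
            · intro hg
              rcases forms hM g hg with rfl | rfl | rfl | ⟨_, rfl⟩ | ⟨_, rfl⟩ | ⟨_, rfl⟩
              · exact Or.inl rfl
              · have h := matching_eq_of_mem hM hg hVM (Sym2.mem_mk_right b v) (Sym2.mem_mk_left v w)
                rw [h]; exact Or.inr rfl
              · have h := matching_eq_of_mem hM hg hWM (Sym2.mem_mk_right c w) (Sym2.mem_mk_right v w)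
                rw [h]; exact Or.inr rfl
              · exact Or.inr rfl
              · have h := matching_eq_of_mem hM hg hUM (Sym2.mem_mk_left u w) (Sym2.mem_mk_right a u)
                rw [h]; exact Or.inl rfl
              · have h := matching_eq_of_mem hM hg hUM (Sym2.mem_mk_left u v) (Sym2.mem_mk_right a u)
                rw [h]; exact Or.inl rfl
            · rintro (rfl | hg)
              · exact hUM
              · rw [Set.mem_singleton_iff] at hg; rw [hg]; exact hVM
          have h1 : ({u,v,w} : Set V) ∪ X = ({u,v,w} : Set V) ∪ {a} := by
            rw [← hcov, hMeq, covers_two]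
            ext x
            simp only [Set.mem_insert_iff, Set.mem_singleton_iff, Set.mem_union]
            tauto
          refine ⟨hsa, union_cancel h1 hXN ?_, hMeq⟩
          intro x hx
          rw [Set.mem_singleton_iff] at hx; rw [hx]
          exact hTN a haT
        · -- eW = s(u,w) clashes with eV = s(v,w)
          exfalso
          have h := matching_eq_of_mem hM hVM hWM (Sym2.mem_mk_right v w) (Sym2.mem_mk_right u w)
          rcases Sym2.eq_iff.mp h with ⟨h1, _⟩ | ⟨h1, _⟩
          exacts [huv h1.symm, hvw h1]
      · -- eV = s(u,v) clashes with eU = s(a,u)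
        exfalso
        have h := matching_eq_of_mem hM hUM hVM (Sym2.mem_mk_right a u) (Sym2.mem_mk_left u v)
        rcases Sym2.eq_iff.mp h with ⟨h1, _⟩ | ⟨h1, _⟩
        exacts [ne1 haT hu h1, ne1 haT hv h1]
    · -- eU = s(u,w)
      rcases formV hM eV hVM hVv with rfl | ⟨hsa, rfl⟩ | ⟨hsc, rfl⟩
      · -- eV = s(b,v)
        rcases formW hM eW hWM hWw with rfl | ⟨hsa, rfl⟩ | ⟨hsb', rfl⟩
        · -- eW = s(c,w) clashes with eU = s(u,w)
          exfalso
          have h := matching_eq_of_mem hM hUM hWM (Sym2.mem_mk_right u w) (Sym2.mem_mk_right c w)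
          rcases Sym2.eq_iff.mp h with ⟨h1, _⟩ | ⟨h1, _⟩
          exacts [ne2 hcT hu h1, huw h1]
        · -- eW = s(v,w) clashes with eU = s(u,w)
          exfalso
          have h := matching_eq_of_mem hM hUM hWM (Sym2.mem_mk_right u w) (Sym2.mem_mk_right v w)
          rcases Sym2.eq_iff.mp h with ⟨h1, _⟩ | ⟨h1, _⟩
          exacts [huv h1, huw h1]
        · -- eW = s(u,w) = eU : good pair (b)
          right; right; left
          have hMeq : M = {s(b,v), s(u,w)} := by
            ext g
            constructor
            · intro hg
              rcases forms hM g hg with rfl | rfl | rfl | ⟨_, rfl⟩ | ⟨_, rfl⟩ | ⟨_, rfl⟩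
              · have h := matching_eq_of_mem hM hg hUM (Sym2.mem_mk_right a u) (Sym2.mem_mk_left u w)
                rw [h]; exact Or.inr rfl
              · exact Or.inl rfl
              · have h := matching_eq_of_mem hM hg hWM (Sym2.mem_mk_right c w) (Sym2.mem_mk_right u w)
                rw [h]; exact Or.inr rfl
              · have h := matching_eq_of_mem hM hg hVM (Sym2.mem_mk_left v w) (Sym2.mem_mk_right b v)
                rw [h]; exact Or.inl rfl
              · exact Or.inr rfl
              · have h := matching_eq_of_mem hM hg hUM (Sym2.mem_mk_left u v) (Sym2.mem_mk_left u w)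
                rw [h]; exact Or.inr rfl
            · rintro (rfl | hg)
              · exact hVM
              · rw [Set.mem_singleton_iff] at hg; rw [hg]; exact hUM
          have h1 : ({u,v,w} : Set V) ∪ X = ({u,v,w} : Set V) ∪ {b} := by
            rw [← hcov, hMeq, covers_two]
            ext x
            simp only [Set.mem_insert_iff, Set.mem_singleton_iff, Set.mem_union]
            tauto
          refine ⟨hsb, union_cancel h1 hXN ?_, hMeq⟩
          intro x hx
          rw [Set.mem_singleton_iff] at hx; rw [hx]
          exact hTN b hbT
      · -- eV = s(v,w) clashes with eU = s(u,w)
        exfalso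
        have h := matching_eq_of_mem hM hUM hVM (Sym2.mem_mk_right u w) (Sym2.mem_mk_right v w)
        rcases Sym2.eq_iff.mp h with ⟨h1, _⟩ | ⟨h1, _⟩
        exacts [huv h1, huw h1]
      · -- eV = s(u,v) clashes with eU = s(u,w)
        exfalso
        have h := matching_eq_of_mem hM hUM hVM (Sym2.mem_mk_left u w) (Sym2.mem_mk_left u v)
        rcases Sym2.eq_iff.mp h with ⟨_, h2⟩ | ⟨h1, _⟩
        exacts [hvw h2.symm, huv h1]
    · -- eU = s(u,v)
      rcases formV hM eV hVM hVv with rfl | ⟨hsa, rfl⟩ | ⟨hsc', rfl⟩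
      · -- eV = s(b,v) clashes with eU = s(u,v)
        exfalso
        have h := matching_eq_of_mem hM hUM hVM (Sym2.mem_mk_right u v) (Sym2.mem_mk_right b v)
        rcases Sym2.eq_iff.mp h with ⟨h1, _⟩ | ⟨h1, _⟩
        exacts [ne2 hbT hu h1, huv h1]
      · -- eV = s(v,w) clashes with eU = s(u,v)
        exfalso
        have h := matching_eq_of_mem hM hUM hVM (Sym2.mem_mk_right u v) (Sym2.mem_mk_left v w)
        rcases Sym2.eq_iff.mp h with ⟨h1, _⟩ | ⟨h1, _⟩
        exacts [huv h1, huw h1]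
      · -- eV = s(u,v) = eU
        rcases formW hM eW hWM hWw with rfl | ⟨hsa, rfl⟩ | ⟨hsb, rfl⟩
        · -- eW = s(c,w) : good pair (c)
          right; right; right
          have hMeq : M = {s(c,w), s(u,v)} := by
            ext g
            constructor
            · intro hg
              rcases forms hM g hg with rfl | rfl | rfl | ⟨_, rfl⟩ | ⟨_, rfl⟩ | ⟨_, rfl⟩
              · have h := matching_eq_of_mem hM hg hUM (Sym2.mem_mk_right a u) (Sym2.mem_mk_left u v)
                rw [h]; exact Or.inr rfl
              · have h := matching_eq_of_mem hM hg hVM (Sym2.mem_mk_right b v) (Sym2.mem_mk_right u v)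
                rw [h]; exact Or.inr rfl
              · exact Or.inl rfl
              · have h := matching_eq_of_mem hM hg hVM (Sym2.mem_mk_left v w) (Sym2.mem_mk_right u v)
                rw [h]; exact Or.inr rfl
              · have h := matching_eq_of_mem hM hg hWM (Sym2.mem_mk_right u w) (Sym2.mem_mk_right c w)
                rw [h]; exact Or.inl rfl
              · exact Or.inr rfl
            · rintro (rfl | hg)
              · exact hWM
              · rw [Set.mem_singleton_iff] at hg; rw [hg]; exact hUM
          have h1 : ({u,v,w} : Set V) ∪ X = ({u,v,w} : Set V) ∪ {c} := by
            rw [← hcov, hMeq, covers_two]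
            ext x
            simp only [Set.mem_insert_iff, Set.mem_singleton_iff, Set.mem_union]
            tauto
          refine ⟨hsc, union_cancel h1 hXN ?_, hMeq⟩
          intro x hx
          rw [Set.mem_singleton_iff] at hx; rw [hx]
          exact hTN c hcT
        · -- eW = s(v,w) clashes with eU = s(u,v)
          exfalso
          have h := matching_eq_of_mem hM hUM hWM (Sym2.mem_mk_right u v) (Sym2.mem_mk_left v w)
          rcases Sym2.eq_iff.mp h with ⟨h1, _⟩ | ⟨h1, _⟩
          exacts [huv h1, huw h1]
        · -- eW = s(u,w) clashes with eU = s(u,v)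
          exfalso
          have h := matching_eq_of_mem hM hUM hWM (Sym2.mem_mk_left u v) (Sym2.mem_mk_left u w)
          rcases Sym2.eq_iff.mp h with ⟨_, h2⟩ | ⟨h1, _⟩
          exacts [hvw h2, huw h1]
  have hone : ∀ x y : V, x ≠ y → ({x} : Set V) ≠ ({y} : Set V) :=
    fun x y hxy h => hxy (Set.singleton_eq_singleton_iff.mp h)
  have htrip : ∀ x : V, ({a, b, c} : Set V) = {x} → False := by
    intro x h
    have h1 : a ∈ ({x} : Set V) := by rw [← h]; exact Or.inl rfl
    have h2 : b ∈ ({x} : Set V) := by rw [← h]; exact Or.inr (Or.inl rfl)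
    rw [Set.mem_singleton_iff] at h1 h2
    exact hab (h1.trans h2.symm)
  refine ⟨G, by rw [hGv]; exact Set.subset_union_left, ?_, ?_⟩
  · ext X
    simp only [FinGraph.matchingPattern, Set.mem_setOf_eq]
    constructor
    · rintro ⟨hXT, M, hM, hcov⟩
      rw [hvd] at hcov
      rcases key M X hM hXT hcov with ⟨hX, _⟩ | ⟨hsa, hX, _⟩ | ⟨hsb, hX, _⟩ | ⟨hsc, hX, _⟩
      · exact Or.inl hX
      · exact Or.inr (Or.inl ⟨hsa, hX⟩)
      · exact Or.inr (Or.inr (Or.inl ⟨hsb, hX⟩))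
      · exact Or.inr (Or.inr (Or.inr ⟨hsc, hX⟩))
    · rintro (rfl | ⟨hsa, rfl⟩ | ⟨hsb, rfl⟩ | ⟨hsc, rfl⟩)
      · refine ⟨?_, {s(a,u), s(b,v), s(c,w)}, ?_, ?_⟩
        · rintro x (rfl | rfl | hx)
          · exact haT
          · exact hbT
          · rw [Set.mem_singleton_iff] at hx; rw [hx]; exact hcT
        · refine isMatching_three G ?_ ?_ ?_ hab (ne1 haT hv) (ne2 hbT hu) huv
            hac (ne1 haT hw) (ne2 hcT hu) huw hbc (ne1 hbT hw) (ne2 hcT hv) hvw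
          · rw [hGadj]; exact Or.inl (Or.inl ⟨rfl, rfl⟩)
          · rw [hGadj]; exact Or.inl (Or.inr (Or.inl ⟨rfl, rfl⟩))
          · rw [hGadj]; exact Or.inl (Or.inr (Or.inr (Or.inl ⟨rfl, rfl⟩)))
        · rw [covers_three, hvd]
          ext x
          simp only [Set.mem_insert_iff, Set.mem_singleton_iff, Set.mem_union]
          tauto
      · refine ⟨?_, {s(a,u), s(v,w)}, ?_, ?_⟩
        · intro x hx; rw [Set.mem_singleton_iff] at hx; rw [hx]; exact haT
        · refine isMatching_two G ?_ ?_ (ne1 haT hv) (ne1 haT hw) huv huw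
          · rw [hGadj]; exact Or.inl (Or.inl ⟨rfl, rfl⟩)
          · rw [hGadj]; exact Or.inl (Or.inr (Or.inr (Or.inr (Or.inl ⟨hsa, rfl, rfl⟩))))
        · rw [covers_two, hvd]
          ext x
          simp only [Set.mem_insert_iff, Set.mem_singleton_iff, Set.mem_union]
          tauto
      · refine ⟨?_, {s(b,v), s(u,w)}, ?_, ?_⟩
        · intro x hx; rw [Set.mem_singleton_iff] at hx; rw [hx]; exact hbT
        · refine isMatching_two G ?_ ?_ (ne1 hbT hu) (ne1 hbT hw) huv.symm hvw
          · rw [hGadj]; exact Or.inl (Or.inr (Or.inl ⟨rfl, rfl⟩))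
          · rw [hGadj]; exact Or.inl (Or.inr (Or.inr (Or.inr (Or.inr (Or.inl ⟨hsb, rfl, rfl⟩)))))
        · rw [covers_two, hvd]
          ext x
          simp only [Set.mem_insert_iff, Set.mem_singleton_iff, Set.mem_union]
          tauto
      · refine ⟨?_, {s(c,w), s(u,v)}, ?_, ?_⟩
        · intro x hx; rw [Set.mem_singleton_iff] at hx; rw [hx]; exact hcT
        · refine isMatching_two G ?_ ?_ (ne1 hcT hu) (ne1 hcT hv) ?_ ?_
          · rw [hGadj]; exact Or.inl (Or.inr (Or.inr (Or.inl ⟨rfl, rfl⟩)))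
          · rw [hGadj]; exact Or.inl (Or.inr (Or.inr (Or.inr (Or.inr (Or.inr ⟨hsc, rfl, rfl⟩)))))
          · exact huw.symm
          · exact hvw.symm
        · rw [covers_two, hvd]
          ext x
          simp only [Set.mem_insert_iff, Set.mem_singleton_iff, Set.mem_union]
          tauto
  · intro X hXp
    obtain ⟨hXT, M, hM, hcov⟩ := hXp
    refine ⟨M, ⟨hM, hcov⟩, ?_⟩
    rintro M' ⟨hM', hcov'⟩
    rw [hvd] at hcov hcov'
    rcases key M X hM hXT hcov with ⟨hX1, hMe⟩ | ⟨_, hX1, hMe⟩ | ⟨_, hX1, hMe⟩ | ⟨_, hX1, hMe⟩ <;>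
      rcases key M' X hM' hXT hcov' with ⟨hX2, hMe'⟩ | ⟨_, hX2, hMe'⟩ | ⟨_, hX2, hMe'⟩ | ⟨_, hX2, hMe'⟩ <;>
      first
        | (exact absurd (hX1.symm.trans hX2) (fun h => htrip _ h))
        | (exact absurd (hX2.symm.trans hX1) (fun h => htrip _ h))
        | (exact absurd (hX1.symm.trans hX2) (hone _ _ (by first | exact hab | exact hac | exact hbc | exact hab.symm | exact hac.symm | exact hbc.symm)))
        | (rw [hMe', hMe])

lemma subset_triple {V : Type} {a b c : V} {X : Set V} (h : X ⊆ {a, b, c}) :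
    X = ∅ ∨ X = {a} ∨ X = {b} ∨ X = {c} ∨ X = {a, b} ∨ X = {a, c} ∨ X = {b, c} ∨
      X = {a, b, c} := by
  classical
  have body : ∀ (D : Set V), (∀ t, t ∈ X → t ∈ D) → (∀ t, t ∈ D → t ∈ X) → X = D :=
    fun D h1 h2 => Set.eq_of_subset_of_subset h1 h2
  by_cases ha : a ∈ X <;> by_cases hb : b ∈ X <;> by_cases hc : c ∈ X
  · refine Or.inr (Or.inr (Or.inr (Or.inr (Or.inr (Or.inr (Or.inr ?_))))))
    refine body _ (fun t ht => h ht) ?_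
    rintro t (rfl | rfl | rfl) <;> assumption
  · refine Or.inr (Or.inr (Or.inr (Or.inr (Or.inl ?_))))
    refine body _ ?_ ?_
    · intro t ht
      rcases h ht with rfl | rfl | rfl
      · exact Or.inl rfl
      · exact Or.inr rfl
      · exact absurd ht hc
    · rintro t (rfl | rfl) <;> assumption
  · refine Or.inr (Or.inr (Or.inr (Or.inr (Or.inr (Or.inl ?_)))))
    refine body _ ?_ ?_
    · intro t ht
      rcases h ht with rfl | rfl | rfl
      · exact Or.inl rfl
      · exact absurd ht hb
      · exact Or.inr rfl
    · rintro t (rfl | rfl) <;> assumption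
  · refine Or.inr (Or.inl ?_)
    refine body _ ?_ ?_
    · intro t ht
      rcases h ht with rfl | rfl | rfl
      · exact rfl
      · exact absurd ht hb
      · exact absurd ht hc
    · rintro t rfl; assumption
  · refine Or.inr (Or.inr (Or.inr (Or.inr (Or.inr (Or.inr (Or.inl ?_))))))
    refine body _ ?_ ?_
    · intro t ht
      rcases h ht with rfl | rfl | rfl
      · exact absurd ht ha
      · exact Or.inl rfl
      · exact Or.inr rfl
    · rintro t (rfl | rfl) <;> assumption
  · refine Or.inr (Or.inr (Or.inl ?_))
    refine body _ ?_ ?_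
    · intro t ht
      rcases h ht with rfl | rfl | rfl
      · exact absurd ht ha
      · exact rfl
      · exact absurd ht hc
    · rintro t rfl; assumption
  · refine Or.inr (Or.inr (Or.inr (Or.inl ?_)))
    refine body _ ?_ ?_
    · intro t ht
      rcases h ht with rfl | rfl | rfl
      · exact absurd ht ha
      · exact absurd ht hb
      · exact rfl
    · rintro t rfl; assumption
  · refine Or.inl ?_
    refine body _ ?_ ?_
    · intro t ht
      rcases h ht with rfl | rfl | rfl
      · exact absurd ht ha
      · exact absurd ht hb
      · exact absurd ht hc
    · rintro t ht; exact ht.elim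

lemma pattern_eq_even {V : Type} {F : Set (Set V)} {A B : Set V}
    (hforward : ∀ X ∈ F, X ≠ ∅ → ∃ t, t ∈ A ∧ ∃ t', t' ∈ B ∧ t ≠ t' ∧ X = {t, t'})
    (hback : ∀ t ∈ A, ∀ t' ∈ B, t ≠ t' → ({t, t'} : Set V) ∈ F) :
    {X : Set V | ((∅ ∈ F) ∧ X = ∅) ∨ ∃ t, t ∈ A ∧ ∃ t', t' ∈ B ∧ t ≠ t' ∧ X = {t, t'}} = F := by
  ext X
  simp only [Set.mem_setOf_eq]
  constructor
  · rintro (⟨h0, rfl⟩ | ⟨t, ht, t', ht', htt', rfl⟩)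
    · exact h0
    · exact hback t ht t' ht' htt'
  · intro hX
    by_cases h0 : X = ∅
    · exact Or.inl ⟨h0 ▸ hX, h0⟩
    · exact Or.inr (hforward X hX h0)

set_option maxHeartbeats 2000000 in
/-- For a terminal set `T` with `|T| ≤ 3` and any nonempty family `F` of subsets of `T`
all of whose members have the same cardinality parity, there is a finite simple graph `G'`
containing `T` whose matching pattern on `T` equals `F`; moreover, for each `X ∈ F` there
is exactly one matching of `G'` covering exactly `(V(G') \ T) ∪ X`. -/
theorem mimicking_network_three_terminals {V : Type} [Infinite V]
    (T : Set V) (hTfin : T.Finite) (hT3 : T.ncard ≤ 3)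
    (F : Set (Set V)) (hF : ∀ X ∈ F, X ⊆ T) (hne : F.Nonempty)
    (hpar : ∀ X ∈ F, ∀ Y ∈ F, X.ncard % 2 = Y.ncard % 2) :
    ∃ G' : FinGraph V, T ⊆ G'.verts ∧ G'.matchingPattern T = F ∧
      ∀ X ∈ F, ∃! M : Set (Sym2 V),
        G'.IsMatching M ∧ coversVerts M = (G'.verts \ T) ∪ X := by
  classical
  have hcard : hTfin.toFinset.card ≤ 3 := by
    rw [← Set.ncard_eq_toFinset_card T hTfin]; exact hT3
  obtain ⟨s, hs, hc3⟩ := Infinite.exists_superset_card_eq hTfin.toFinset 3 hcard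
  obtain ⟨x, y, z, hxy, hxz, hyz, rfl⟩ := Finset.card_eq_three.mp hc3
  have hTsub : T ⊆ ({x, y, z} : Set V) := by
    intro t ht
    have h := hs (hTfin.mem_toFinset.mpr ht)
    simp only [Finset.mem_insert, Finset.mem_singleton] at h
    simpa using h
  obtain ⟨u, hu'⟩ := hTfin.infinite_compl.nonempty
  have hu : u ∉ T := hu'
  obtain ⟨v, hv'⟩ := (hTfin.insert u).infinite_compl.nonempty
  have hv : v ∉ T := fun h => hv' (Set.mem_insert_of_mem u h)
  have huv : u ≠ v := fun h => hv' (by rw [← h]; exact Set.mem_insert u T)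
  obtain ⟨w, hw'⟩ := ((hTfin.insert u).insert v).infinite_compl.nonempty
  have hw : w ∉ T := fun h => hw' (Set.mem_insert_of_mem v (Set.mem_insert_of_mem u h))
  have huw : u ≠ w := fun h =>
    hw' (by rw [← h]; exact Set.mem_insert_of_mem v (Set.mem_insert u T))
  have hvw : v ≠ w := fun h => hw' (by rw [← h]; exact Set.mem_insert v _)
  obtain ⟨X0, hX0⟩ := hne
  have hsub8 : ∀ X ∈ F, X = ∅ ∨ X = {x} ∨ X = {y} ∨ X = {z} ∨ X = {x, y} ∨ X = {x, z} ∨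
      X = {y, z} ∨ X = {x, y, z} :=
    fun X hX => subset_triple (fun t ht => hTsub (hF X hX ht))
  have n1 : ∀ p : V, ({p} : Set V).ncard = 1 := fun p => Set.ncard_singleton p
  have n2 : ∀ p q : V, p ≠ q → ({p, q} : Set V).ncard = 2 := fun p q h => Set.ncard_pair h
  have n3 : ({x, y, z} : Set V).ncard = 3 := by
    rw [Set.ncard_insert_of_notMem (by simp [hxy, hxz]) ((Set.finite_singleton z).insert y),
      Set.ncard_pair hyz]
  by_cases hp0 : X0.ncard % 2 = 0
  · -- EVEN case
    have heven : ∀ X ∈ F, X.ncard % 2 = 0 := fun X hX => (hpar X hX X0 hX0).trans hp0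
    have hshape : ∀ X ∈ F, X = ∅ ∨ X = {x, y} ∨ X = {x, z} ∨ X = {y, z} := by
      intro X hX
      have he := heven X hX
      rcases hsub8 X hX with rfl | rfl | rfl | rfl | rfl | rfl | rfl | rfl
      · exact Or.inl rfl
      · rw [n1] at he; omega
      · rw [n1] at he; omega
      · rw [n1] at he; omega
      · exact Or.inr (Or.inl rfl)
      · exact Or.inr (Or.inr (Or.inl rfl))
      · exact Or.inr (Or.inr (Or.inr rfl))
      · rw [n3] at he; omega
    by_cases f1 : ({x, y} : Set V) ∈ F <;> by_cases f2 : ({x, z} : Set V) ∈ F <;>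
      by_cases f3 : ({y, z} : Set V) ∈ F
    · -- TTT : A = {x,y}, B = {y,z}
      have hxT : x ∈ T := hF _ f1 (Or.inl rfl)
      have hyT : y ∈ T := hF _ f1 (Or.inr rfl)
      have hzT : z ∈ T := hF _ f3 (Or.inr rfl)
      obtain ⟨G, hG1, hG2, hG3⟩ := lemE (A := {x, y}) (B := {y, z}) hTfin hu hv huv
        (by rintro t (rfl | rfl) <;> assumption)
        (by rintro t (rfl | rfl) <;> assumption)
        ((∅ : Set V) ∈ F)
        (by
          have hy' : ∀ r : V, r ∈ ({x, y} : Set V) → r ∈ ({y, z} : Set V) → r = y := by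
            rintro r (rfl | rfl) hrB
            · rcases hrB with h | h
              · exact absurd h hxy
              · exact absurd h hxz
            · rfl
          rintro p ⟨hpA, hpB⟩ q ⟨hqA, hqB⟩
          rw [hy' p hpA hpB, hy' q hqA hqB])
      have hpat : G.matchingPattern T = F := by
        rw [hG2]
        refine pattern_eq_even ?_ ?_
        · intro X hX hne0
          rcases hshape X hX with rfl | rfl | rfl | rfl
          · exact absurd rfl hne0
          · exact ⟨x, Or.inl rfl, y, Or.inl rfl, hxy, rfl⟩
          · exact ⟨x, Or.inl rfl, z, Or.inr rfl, hxz, rfl⟩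
          · exact ⟨y, Or.inr rfl, z, Or.inr rfl, hyz, rfl⟩
        · rintro t ht t' ht' htt'
          rcases ht with rfl | rfl <;> rcases ht' with rfl | rfl <;>
            first
              | exact absurd rfl htt'
              | exact f1
              | exact f2
              | exact f3
      exact ⟨G, hG1, hpat, fun X hX => hG3 X (by rw [hpat]; exact hX)⟩
    · -- TTF : A = {x}, B = {y,z}
      have hxT : x ∈ T := hF _ f1 (Or.inl rfl)
      have hyT : y ∈ T := hF _ f1 (Or.inr rfl)
      have hzT : z ∈ T := hF _ f2 (Or.inr rfl)
      obtain ⟨G, hG1, hG2, hG3⟩ := lemE (A := {x}) (B := {y, z}) hTfin hu hv huv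
        (by rintro t rfl; exact hxT)
        (by rintro t (rfl | rfl) <;> assumption)
        ((∅ : Set V) ∈ F)
        (by
          rintro p ⟨rfl, h | h⟩
          · exact absurd h hxy
          · exact absurd h hxz)
      have hpat : G.matchingPattern T = F := by
        rw [hG2]
        refine pattern_eq_even ?_ ?_
        · intro X hX hne0
          rcases hshape X hX with rfl | rfl | rfl | rfl
          · exact absurd rfl hne0
          · exact ⟨x, rfl, y, Or.inl rfl, hxy, rfl⟩
          · exact ⟨x, rfl, z, Or.inr rfl, hxz, rfl⟩
          · exact absurd hX f3
        · rintro t rfl t' (rfl | rfl) htt'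
          · exact f1
          · exact f2
      exact ⟨G, hG1, hpat, fun X hX => hG3 X (by rw [hpat]; exact hX)⟩
    · -- TFT : A = {y}, B = {x,z}
      have hxT : x ∈ T := hF _ f1 (Or.inl rfl)
      have hyT : y ∈ T := hF _ f1 (Or.inr rfl)
      have hzT : z ∈ T := hF _ f3 (Or.inr rfl)
      obtain ⟨G, hG1, hG2, hG3⟩ := lemE (A := {y}) (B := {x, z}) hTfin hu hv huv
        (by rintro t rfl; exact hyT)
        (by rintro t (rfl | rfl) <;> assumption)
        ((∅ : Set V) ∈ F)
        (by
          rintro p ⟨rfl, h | h⟩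
          · exact absurd h.symm hxy
          · exact absurd h hyz)
      have hpat : G.matchingPattern T = F := by
        rw [hG2]
        refine pattern_eq_even ?_ ?_
        · intro X hX hne0
          rcases hshape X hX with rfl | rfl | rfl | rfl
          · exact absurd rfl hne0
          · exact ⟨y, rfl, x, Or.inl rfl, Ne.symm hxy, Set.pair_comm x y⟩
          · exact absurd hX f2
          · exact ⟨y, rfl, z, Or.inr rfl, hyz, rfl⟩
        · rintro t rfl t' (rfl | rfl) htt'
          · rw [Set.pair_comm]; exact f1
          · exact f3
      exact ⟨G, hG1, hpat, fun X hX => hG3 X (by rw [hpat]; exact hX)⟩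
    · -- TFF : A = {x}, B = {y}
      have hxT : x ∈ T := hF _ f1 (Or.inl rfl)
      have hyT : y ∈ T := hF _ f1 (Or.inr rfl)
      obtain ⟨G, hG1, hG2, hG3⟩ := lemE (A := {x}) (B := {y}) hTfin hu hv huv
        (by rintro t rfl; exact hxT)
        (by rintro t rfl; exact hyT)
        ((∅ : Set V) ∈ F)
        (by rintro p ⟨rfl, h⟩; exact absurd h hxy)
      have hpat : G.matchingPattern T = F := by
        rw [hG2]
        refine pattern_eq_even ?_ ?_
        · intro X hX hne0
          rcases hshape X hX with rfl | rfl | rfl | rfl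
          · exact absurd rfl hne0
          · exact ⟨x, rfl, y, rfl, hxy, rfl⟩
          · exact absurd hX f2
          · exact absurd hX f3
        · rintro t rfl t' rfl htt'
          exact f1
      exact ⟨G, hG1, hpat, fun X hX => hG3 X (by rw [hpat]; exact hX)⟩
    · -- FTT : A = {z}, B = {x,y}
      have hxT : x ∈ T := hF _ f2 (Or.inl rfl)
      have hzT : z ∈ T := hF _ f2 (Or.inr rfl)
      have hyT : y ∈ T := hF _ f3 (Or.inl rfl)
      obtain ⟨G, hG1, hG2, hG3⟩ := lemE (A := {z}) (B := {x, y}) hTfin hu hv huv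
        (by rintro t rfl; exact hzT)
        (by rintro t (rfl | rfl) <;> assumption)
        ((∅ : Set V) ∈ F)
        (by
          rintro p ⟨rfl, h | h⟩
          · exact absurd h.symm hxz
          · exact absurd h.symm hyz)
      have hpat : G.matchingPattern T = F := by
        rw [hG2]
        refine pattern_eq_even ?_ ?_
        · intro X hX hne0
          rcases hshape X hX with rfl | rfl | rfl | rfl
          · exact absurd rfl hne0
          · exact absurd hX f1
          · exact ⟨z, rfl, x, Or.inl rfl, fun h => hxz h.symm, Set.pair_comm x z⟩
          · exact ⟨z, rfl, y, Or.inr rfl, fun h => hyz h.symm, Set.pair_comm y z⟩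
        · rintro t rfl t' (rfl | rfl) htt'
          · rw [Set.pair_comm]; exact f2
          · rw [Set.pair_comm]; exact f3
      exact ⟨G, hG1, hpat, fun X hX => hG3 X (by rw [hpat]; exact hX)⟩
    · -- FTF : A = {x}, B = {z}
      have hxT : x ∈ T := hF _ f2 (Or.inl rfl)
      have hzT : z ∈ T := hF _ f2 (Or.inr rfl)
      obtain ⟨G, hG1, hG2, hG3⟩ := lemE (A := {x}) (B := {z}) hTfin hu hv huv
        (by rintro t rfl; exact hxT)
        (by rintro t rfl; exact hzT)
        ((∅ : Set V) ∈ F)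
        (by rintro p ⟨rfl, h⟩; exact absurd h hxz)
      have hpat : G.matchingPattern T = F := by
        rw [hG2]
        refine pattern_eq_even ?_ ?_
        · intro X hX hne0
          rcases hshape X hX with rfl | rfl | rfl | rfl
          · exact absurd rfl hne0
          · exact absurd hX f1
          · exact ⟨x, rfl, z, rfl, hxz, rfl⟩
          · exact absurd hX f3
        · rintro t rfl t' rfl htt'
          exact f2
      exact ⟨G, hG1, hpat, fun X hX => hG3 X (by rw [hpat]; exact hX)⟩
    · -- FFT : A = {y}, B = {z}
      have hyT : y ∈ T := hF _ f3 (Or.inl rfl)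
      have hzT : z ∈ T := hF _ f3 (Or.inr rfl)
      obtain ⟨G, hG1, hG2, hG3⟩ := lemE (A := {y}) (B := {z}) hTfin hu hv huv
        (by rintro t rfl; exact hyT)
        (by rintro t rfl; exact hzT)
        ((∅ : Set V) ∈ F)
        (by rintro p ⟨rfl, h⟩; exact absurd h hyz)
      have hpat : G.matchingPattern T = F := by
        rw [hG2]
        refine pattern_eq_even ?_ ?_
        · intro X hX hne0
          rcases hshape X hX with rfl | rfl | rfl | rfl
          · exact absurd rfl hne0
          · exact absurd hX f1
          · exact absurd hX f2
          · exact ⟨y, rfl, z, rfl, hyz, rfl⟩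
        · rintro t rfl t' rfl htt'
          exact f3
      exact ⟨G, hG1, hpat, fun X hX => hG3 X (by rw [hpat]; exact hX)⟩
    · -- FFF : A = ∅, B = ∅
      obtain ⟨G, hG1, hG2, hG3⟩ := lemE (A := (∅ : Set V)) (B := (∅ : Set V)) hTfin hu hv huv
        (Set.empty_subset T) (Set.empty_subset T)
        ((∅ : Set V) ∈ F)
        (by rintro p ⟨hp, _⟩; exact hp.elim)
      have hpat : G.matchingPattern T = F := by
        rw [hG2]
        refine pattern_eq_even ?_ ?_
        · intro X hX hne0
          rcases hshape X hX with rfl | rfl | rfl | rfl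
          · exact absurd rfl hne0
          · exact absurd hX f1
          · exact absurd hX f2
          · exact absurd hX f3
        · rintro t hp t' _ _
          exact hp.elim
      exact ⟨G, hG1, hpat, fun X hX => hG3 X (by rw [hpat]; exact hX)⟩
  · -- ODD case
    have hodd : ∀ X ∈ F, X.ncard % 2 = 1 := by
      intro X hX
      have h := hpar X hX X0 hX0
      omega
    have hshape : ∀ X ∈ F, X = {x} ∨ X = {y} ∨ X = {z} ∨ X = {x, y, z} := by
      intro X hX
      have ho := hodd X hX
      rcases hsub8 X hX with rfl | rfl | rfl | rfl | rfl | rfl | rfl | rfl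
      · rw [Set.ncard_empty] at ho; omega
      · exact Or.inl rfl
      · exact Or.inr (Or.inl rfl)
      · exact Or.inr (Or.inr (Or.inl rfl))
      · rw [n2 x y hxy] at ho; omega
      · rw [n2 x z hxz] at ho; omega
      · rw [n2 y z hyz] at ho; omega
      · exact Or.inr (Or.inr (Or.inr rfl))
    by_cases htr : ({x, y, z} : Set V) ∈ F
    · have hxT : x ∈ T := hF _ htr (Or.inl rfl)
      have hyT : y ∈ T := hF _ htr (Or.inr (Or.inl rfl))
      have hzT : z ∈ T := hF _ htr (Or.inr (Or.inr rfl))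
      obtain ⟨G, hG1, hG2, hG3⟩ := lemTriple hTfin hxT hyT hzT hxy hxz hyz hu hv hw huv huw hvw
        (({x} : Set V) ∈ F) (({y} : Set V) ∈ F) (({z} : Set V) ∈ F)
      have hpat : G.matchingPattern T = F := by
        rw [hG2]
        ext X
        simp only [Set.mem_setOf_eq]
        constructor
        · rintro (rfl | ⟨h, rfl⟩ | ⟨h, rfl⟩ | ⟨h, rfl⟩) <;> assumption
        · intro hX
          rcases hshape X hX with rfl | rfl | rfl | rfl
          · exact Or.inr (Or.inl ⟨hX, rfl⟩)
          · exact Or.inr (Or.inr (Or.inl ⟨hX, rfl⟩))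
          · exact Or.inr (Or.inr (Or.inr ⟨hX, rfl⟩))
          · exact Or.inl rfl
      exact ⟨G, hG1, hpat, fun X hX => hG3 X (by rw [hpat]; exact hX)⟩
    · have hSsub : {t : V | ({t} : Set V) ∈ F} ⊆ T := fun t ht => hF _ ht rfl
      obtain ⟨G, hG1, hG2, hG3⟩ := lemStar hTfin hu hSsub
      have hpat : G.matchingPattern T = F := by
        rw [hG2]
        ext X
        simp only [Set.mem_setOf_eq]
        constructor
        · rintro ⟨t, ht, rfl⟩
          exact ht
        · intro hX
          rcases hshape X hX with rfl | rfl | rfl | rfl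
          · exact ⟨x, hX, rfl⟩
          · exact ⟨y, hX, rfl⟩
          · exact ⟨z, hX, rfl⟩
          · exact absurd hX htr
      exact ⟨G, hG1, hpat, fun X hX => hG3 X (by rw [hpat]; exact hX)⟩
end
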